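/- arXiv:2502.11348 — 5 statements merged into one kernel-verified Lean document; each statement's English description precedes it below -/
import Mathlib

section
/- (Lemma 3.1, identity (3.2)) Let (u,v) be a positive equilibrium, and let l_* and l_1^*, l_2^* be integers with 1 ≤ l_* ≤ m3 and 0 ≤ l_i^* ≤ m_i for i = 1,2. Then (f^3_{l_*}·v^3_{l_*} − g^3_{l_*}·u^3_{l_*})·((d1+q1)/d1)^{l_*−m3} − Σ_{i=1}^{2} (f^i_{l_i^*+1}·v^i_{l_i^*} − g^i_{l_i^*+1}·u^i_{l_i^*})·((d1+q1)/d1)^{l_i^*} = (1/d1)·Σ_{i=1}^{2} Σ_{k=1}^{l_i^*} h^i_k·f^i_k·((d1+q1)/d1)^{k−1} + (1/d1)·Σ_{k=l_*+1}^{m3} h^3_k·f^3_k·((d1+q1)/d1)^{k−m3−1}, where v^i_0 and u^i_0 denote v^3_{m3} and u^3_{m3} respectively when l_i^* = 0. -/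
open Finset Filter

noncomputable section

/-- Length of river segment `i` (segments are numbered 1, 2, 3; segments 1 and 2 are the
branches, segment 3 is the main river). -/
def seg (m1 m2 m3 : ℕ) (i : ℕ) : ℕ := if i = 1 then m1 else if i = 2 then m2 else m3

/-- `w` is positive on all patches of the Y-shaped network. -/
def YPos (m1 m2 m3 : ℕ) (w : ℕ → ℕ → ℝ) : Prop :=
  ∀ i k, (i = 1 ∨ i = 2 ∨ i = 3) → 1 ≤ k → k ≤ seg m1 m2 m3 i → 0 < w i k

/-- Steady-state equations on the Y-shaped network for one species `w` with dispersal rate `d`,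
drift rate `q`, intrinsic growth rate `r`, and competitor density `c` (take `c = 0` for the
single-species model).  The convention `w i 0 = w 3 m3` (for `i = 1, 2`) is part of
the predicate. -/
def YEq (m1 m2 m3 : ℕ) (d q r : ℝ) (w c : ℕ → ℕ → ℝ) : Prop :=
  w 1 0 = w 3 m3 ∧ w 2 0 = w 3 m3 ∧
  (∀ i, (i = 1 ∨ i = 2) → ∀ k, 1 ≤ k → k + 1 ≤ seg m1 m2 m3 i →
    d * w i (k - 1) - (2 * d + q) * w i k + (d + q) * w i (k + 1)
      + w i k * (r - w i k - c i k) = 0) ∧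
  (∀ k, 2 ≤ k → k + 1 ≤ m3 →
    d * w 3 (k - 1) - (2 * d + q) * w 3 k + (d + q) * w 3 (k + 1)
      + w 3 k * (r - w 3 k - c 3 k) = 0) ∧
  (∀ i, (i = 1 ∨ i = 2) →
    -(d + q) * w i (seg m1 m2 m3 i) + d * w i (seg m1 m2 m3 i - 1)
      + w i (seg m1 m2 m3 i) * (r - w i (seg m1 m2 m3 i) - c i (seg m1 m2 m3 i)) = 0) ∧
  (-d * w 3 1 + (d + q) * w 3 2 + w 3 1 * (r - w 3 1 - c 3 1) = 0) ∧
  (d * w 3 (m3 - 1) - (3 * d + q) * w 3 m3 + (d + q) * (w 1 1 + w 2 1)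
    + w 3 m3 * (r - w 3 m3 - c 3 m3) = 0)

/-- Positive equilibrium of the two-species competition patch model on the Y-shaped network. -/
def YPosEquilibrium (m1 m2 m3 : ℕ) (d1 q1 d2 q2 r : ℝ) (u v : ℕ → ℕ → ℝ) : Prop :=
  YPos m1 m2 m3 u ∧ YPos m1 m2 m3 v ∧
  YEq m1 m2 m3 d1 q1 r u v ∧ YEq m1 m2 m3 d2 q2 r v u

/-- Single-species positive equilibrium for parameters `(d, q)`. -/
def YSingleEquilibrium (m1 m2 m3 : ℕ) (d q r : ℝ) (w : ℕ → ℕ → ℝ) : Prop :=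
  YPos m1 m2 m3 w ∧ YEq m1 m2 m3 d q r w (fun _ _ => 0)

/-- The auxiliary flux sequence (`f` when built from `u` with `(d1, q1)`, `g` when built
from `v` with `(d2, q2)`): `Yf ... d q w i k = d * w i (k-1) - (d+q) * w i k` on the index
range `1 ≤ k ≤ mᵢ` for `i = 1,2` and `2 ≤ k ≤ m3` for `i = 3`, and `0` otherwise (in
particular `f 3 1 = 0` and `f i (mᵢ + 1) = 0` for `i = 1, 2`). -/
def Yf (m1 m2 m3 : ℕ) (d q : ℝ) (w : ℕ → ℕ → ℝ) (i k : ℕ) : ℝ :=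
  if i = 3 then (if 2 ≤ k ∧ k ≤ m3 then d * w 3 (k - 1) - (d + q) * w 3 k else 0)
  else (if 1 ≤ k ∧ k ≤ seg m1 m2 m3 i then d * w i (k - 1) - (d + q) * w i k else 0)

/-- The auxiliary sequence `h` built from `v`, on the same index range as `Yf`. -/
def Yh (m1 m2 m3 : ℕ) (d1 q1 d2 q2 : ℝ) (v : ℕ → ℕ → ℝ) (i k : ℕ) : ℝ :=
  if i = 3 then
    (if 2 ≤ k ∧ k ≤ m3 then (d1 - d2) * (v 3 (k - 1) - v 3 k) - (q1 - q2) * v 3 k else 0)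
  else
    (if 1 ≤ k ∧ k ≤ seg m1 m2 m3 i then
      (d1 - d2) * (v i (k - 1) - v i k) - (q1 - q2) * v i k else 0)

/-- `(d, q)` belongs to the region `S1`. -/
def S1mem (d1 q1 d q : ℝ) : Prop :=
  0 < d ∧ d ≤ d1 ∧ 0 < q ∧ q ≤ (q1 / d1) * d ∧ (d, q) ≠ (d1, q1)

/-- `(d, q)` belongs to the region `S2`. -/
def S2mem (d1 q1 d q : ℝ) : Prop :=
  d1 ≤ d ∧ (q1 / d1) * d ≤ q ∧ (d, q) ≠ (d1, q1)

/-- The linearization at a semi-trivial equilibrium `(a, 0)`, with eigenvalue `0`: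
`ψ` solves the linearized system for parameters `(d, q)` with potential `r - a`. -/
def YLinEq (m1 m2 m3 : ℕ) (d q r : ℝ) (a ψ : ℕ → ℕ → ℝ) : Prop :=
  ψ 1 0 = ψ 3 m3 ∧ ψ 2 0 = ψ 3 m3 ∧
  (∀ i, (i = 1 ∨ i = 2) → ∀ k, 1 ≤ k → k + 1 ≤ seg m1 m2 m3 i →
    d * ψ i (k - 1) - (2 * d + q) * ψ i k + (d + q) * ψ i (k + 1)
      + (r - a i k) * ψ i k = 0) ∧
  (∀ k, 2 ≤ k → k + 1 ≤ m3 →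
    d * ψ 3 (k - 1) - (2 * d + q) * ψ 3 k + (d + q) * ψ 3 (k + 1)
      + (r - a 3 k) * ψ 3 k = 0) ∧
  (∀ i, (i = 1 ∨ i = 2) →
    -(d + q) * ψ i (seg m1 m2 m3 i) + d * ψ i (seg m1 m2 m3 i - 1)
      + (r - a i (seg m1 m2 m3 i)) * ψ i (seg m1 m2 m3 i) = 0) ∧
  (-d * ψ 3 1 + (d + q) * ψ 3 2 + (r - a 3 1) * ψ 3 1 = 0) ∧
  (d * ψ 3 (m3 - 1) - (3 * d + q) * ψ 3 m3 + (d + q) * (ψ 1 1 + ψ 2 1)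
    + (r - a 3 m3) * ψ 3 m3 = 0)

/-- Time-dependent equations for one species `W` with competitor `C` on the Y-shaped network
(for `t ≥ 0`), with dispersal rate `d`, drift rate `q` and intrinsic growth rate `r`. -/
def YFlow (m1 m2 m3 : ℕ) (d q r : ℝ) (W C : ℕ → ℕ → ℝ → ℝ) : Prop :=
  (∀ t : ℝ, W 1 0 t = W 3 m3 t) ∧ (∀ t : ℝ, W 2 0 t = W 3 m3 t) ∧
  (∀ i, (i = 1 ∨ i = 2) → ∀ k, 1 ≤ k → k + 1 ≤ seg m1 m2 m3 i → ∀ t : ℝ, 0 ≤ t →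
    HasDerivAt (W i k)
      (d * W i (k - 1) t - (2 * d + q) * W i k t + (d + q) * W i (k + 1) t
        + W i k t * (r - W i k t - C i k t)) t) ∧
  (∀ k, 2 ≤ k → k + 1 ≤ m3 → ∀ t : ℝ, 0 ≤ t →
    HasDerivAt (W 3 k)
      (d * W 3 (k - 1) t - (2 * d + q) * W 3 k t + (d + q) * W 3 (k + 1) t
        + W 3 k t * (r - W 3 k t - C 3 k t)) t) ∧
  (∀ i, (i = 1 ∨ i = 2) → ∀ t : ℝ, 0 ≤ t →
    HasDerivAt (W i (seg m1 m2 m3 i))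
      (-(d + q) * W i (seg m1 m2 m3 i) t + d * W i (seg m1 m2 m3 i - 1) t
        + W i (seg m1 m2 m3 i) t
          * (r - W i (seg m1 m2 m3 i) t - C i (seg m1 m2 m3 i) t)) t) ∧
  (∀ t : ℝ, 0 ≤ t →
    HasDerivAt (W 3 1)
      (-d * W 3 1 t + (d + q) * W 3 2 t + W 3 1 t * (r - W 3 1 t - C 3 1 t)) t) ∧
  (∀ t : ℝ, 0 ≤ t →
    HasDerivAt (W 3 m3)
      (d * W 3 (m3 - 1) t - (3 * d + q) * W 3 m3 t + (d + q) * (W 1 1 t + W 2 1 t)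
        + W 3 m3 t * (r - W 3 m3 t - C 3 m3 t)) t)

/-- Solution of the two-species competition patch model on the Y-shaped network. -/
def YSolution (m1 m2 m3 : ℕ) (d1 q1 d2 q2 r : ℝ) (U V : ℕ → ℕ → ℝ → ℝ) : Prop :=
  YFlow m1 m2 m3 d1 q1 r U V ∧ YFlow m1 m2 m3 d2 q2 r V U

/-- Nonnegative, not identically zero initial data. -/
def YInit (m1 m2 m3 : ℕ) (W : ℕ → ℕ → ℝ → ℝ) : Prop :=
  (∀ i k, (i = 1 ∨ i = 2 ∨ i = 3) → 1 ≤ k → k ≤ seg m1 m2 m3 i → 0 ≤ W i k 0) ∧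
  (∃ i k, (i = 1 ∨ i = 2 ∨ i = 3) ∧ 1 ≤ k ∧ k ≤ seg m1 m2 m3 i ∧ 0 < W i k 0)

section Aux

variable {m1 m2 m3 : ℕ} {d q : ℝ} {w : ℕ → ℕ → ℝ}

lemma Yf_branch {i k : ℕ} (hi : i ≠ 3) (h1 : 1 ≤ k) (h2 : k ≤ seg m1 m2 m3 i) :
    Yf m1 m2 m3 d q w i k = d * w i (k - 1) - (d + q) * w i k := by
  rw [Yf, if_neg hi, if_pos ⟨h1, h2⟩]

lemma Yf_branch_zero {i k : ℕ} (hi : i ≠ 3) (h2 : seg m1 m2 m3 i < k) :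
    Yf m1 m2 m3 d q w i k = 0 := by
  rw [Yf, if_neg hi, if_neg (by omega)]

lemma Yf_main {k : ℕ} (h1 : 2 ≤ k) (h2 : k ≤ m3) :
    Yf m1 m2 m3 d q w 3 k = d * w 3 (k - 1) - (d + q) * w 3 k := by
  rw [Yf, if_pos rfl, if_pos ⟨h1, h2⟩]

lemma Yf_main_one : Yf m1 m2 m3 d q w 3 1 = 0 := by
  rw [Yf, if_pos rfl, if_neg (by omega)]

variable {d1 q1 d2 q2 : ℝ}

lemma Yh_branch {i k : ℕ} (hi : i ≠ 3) (h1 : 1 ≤ k) (h2 : k ≤ seg m1 m2 m3 i) :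
    Yh m1 m2 m3 d1 q1 d2 q2 w i k
      = (d1 - d2) * (w i (k - 1) - w i k) - (q1 - q2) * w i k := by
  rw [Yh, if_neg hi, if_pos ⟨h1, h2⟩]

lemma Yh_main {k : ℕ} (h1 : 2 ≤ k) (h2 : k ≤ m3) :
    Yh m1 m2 m3 d1 q1 d2 q2 w 3 k
      = (d1 - d2) * (w 3 (k - 1) - w 3 k) - (q1 - q2) * w 3 k := by
  rw [Yh, if_pos rfl, if_pos ⟨h1, h2⟩]

end Aux

lemma branch_id (m1 m2 m3 : ℕ) (d1 q1 d2 q2 r : ℝ) (hd1 : 0 < d1) (hq1 : 0 < q1)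
    (u v : ℕ → ℕ → ℝ)
    (hu : YEq m1 m2 m3 d1 q1 r u v) (hv : YEq m1 m2 m3 d2 q2 r v u)
    (i : ℕ) (hi : i = 1 ∨ i = 2) :
    ∀ l, l ≤ seg m1 m2 m3 i →
    (Yf m1 m2 m3 d1 q1 u i (l + 1) * v i l - Yf m1 m2 m3 d2 q2 v i (l + 1) * u i l)
        * ((d1 + q1) / d1) ^ (l : ℤ)
    = (Yf m1 m2 m3 d1 q1 u i 1 * v i 0 - Yf m1 m2 m3 d2 q2 v i 1 * u i 0)
      - (1 / d1) * ∑ k ∈ Finset.Icc 1 l,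
          Yh m1 m2 m3 d1 q1 d2 q2 v i k * Yf m1 m2 m3 d1 q1 u i k
            * ((d1 + q1) / d1) ^ ((k : ℤ) - 1) := by
  have hi3 : i ≠ 3 := by rcases hi with rfl | rfl <;> omega
  have hρ : (d1 + q1) / d1 ≠ 0 := by positivity
  intro l
  induction l with
  | zero =>
    intro _
    rw [Finset.Icc_eq_empty (by omega)]
    simp
  | succ l ih =>
    intro hl
    have ihl := ih (by omega)
    have hf1 : Yf m1 m2 m3 d1 q1 u i (l + 1) = d1 * u i l - (d1 + q1) * u i (l + 1) := by
      rw [Yf_branch hi3 (by omega) hl, Nat.add_sub_cancel]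
    have hg1 : Yf m1 m2 m3 d2 q2 v i (l + 1) = d2 * v i l - (d2 + q2) * v i (l + 1) := by
      rw [Yf_branch hi3 (by omega) hl, Nat.add_sub_cancel]
    have hh1 : Yh m1 m2 m3 d1 q1 d2 q2 v i (l + 1)
        = (d1 - d2) * (v i l - v i (l + 1)) - (q1 - q2) * v i (l + 1) := by
      rw [Yh_branch hi3 (by omega) hl, Nat.add_sub_cancel]
    have hkey : d1 * (Yf m1 m2 m3 d1 q1 u i (l + 1) * v i l
          - Yf m1 m2 m3 d2 q2 v i (l + 1) * u i l)
        = (d1 + q1) * (Yf m1 m2 m3 d1 q1 u i (l + 1 + 1) * v i (l + 1)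
            - Yf m1 m2 m3 d2 q2 v i (l + 1 + 1) * u i (l + 1))
          + Yh m1 m2 m3 d1 q1 d2 q2 v i (l + 1) * Yf m1 m2 m3 d1 q1 u i (l + 1) := by
      rcases eq_or_lt_of_le hl with hcase | hcase
      · -- l + 1 = seg i : upstream boundary
        have hf2 : Yf m1 m2 m3 d1 q1 u i (l + 1 + 1) = 0 :=
          Yf_branch_zero hi3 (by omega)
        have hg2 : Yf m1 m2 m3 d2 q2 v i (l + 1 + 1) = 0 :=
          Yf_branch_zero hi3 (by omega)
        have hEqU := hu.2.2.2.2.1 i hi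
        have hEqV := hv.2.2.2.2.1 i hi
        rw [← hcase] at hEqU hEqV
        simp only [Nat.add_sub_cancel] at hEqU hEqV
        rw [hf1, hg1, hh1, hf2, hg2]
        linear_combination (d1 + q1) * v i (l + 1) * hEqU - (d1 + q1) * u i (l + 1) * hEqV
      · -- interior
        have hf2 : Yf m1 m2 m3 d1 q1 u i (l + 1 + 1)
            = d1 * u i (l + 1) - (d1 + q1) * u i (l + 1 + 1) := by
          rw [Yf_branch hi3 (by omega) (by omega), Nat.add_sub_cancel]
        have hg2 : Yf m1 m2 m3 d2 q2 v i (l + 1 + 1)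
            = d2 * v i (l + 1) - (d2 + q2) * v i (l + 1 + 1) := by
          rw [Yf_branch hi3 (by omega) (by omega), Nat.add_sub_cancel]
        have hEqU := hu.2.2.1 i hi (l + 1) (by omega) (by omega)
        have hEqV := hv.2.2.1 i hi (l + 1) (by omega) (by omega)
        simp only [Nat.add_sub_cancel] at hEqU hEqV
        rw [hf1, hg1, hh1, hf2, hg2]
        linear_combination (d1 + q1) * v i (l + 1) * hEqU - (d1 + q1) * u i (l + 1) * hEqV
    have hd1' : d1 ≠ 0 := ne_of_gt hd1
    have hkey' : Yf m1 m2 m3 d1 q1 u i (l + 1) * v i l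
          - Yf m1 m2 m3 d2 q2 v i (l + 1) * u i l
        = (d1 + q1) / d1 * (Yf m1 m2 m3 d1 q1 u i (l + 1 + 1) * v i (l + 1)
            - Yf m1 m2 m3 d2 q2 v i (l + 1 + 1) * u i (l + 1))
          + 1 / d1 * (Yh m1 m2 m3 d1 q1 d2 q2 v i (l + 1)
              * Yf m1 m2 m3 d1 q1 u i (l + 1)) := by
      field_simp
      linear_combination hkey
    rw [Finset.sum_Icc_succ_top (by omega)]
    have e1 : ((d1 + q1) / d1) ^ ((l + 1 : ℕ) : ℤ)
        = ((d1 + q1) / d1) ^ ((l : ℕ) : ℤ) * ((d1 + q1) / d1) := by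
      rw [show ((l + 1 : ℕ) : ℤ) = ((l : ℕ) : ℤ) + 1 by push_cast; ring, zpow_add_one₀ hρ]
    have e2 : ((l + 1 : ℕ) : ℤ) - 1 = ((l : ℕ) : ℤ) := by push_cast; ring
    rw [e1, e2]
    linear_combination ihl - ((d1 + q1) / d1) ^ ((l : ℕ) : ℤ) * hkey'

lemma main_id (m1 m2 m3 : ℕ) (d1 q1 d2 q2 r : ℝ) (hd1 : 0 < d1) (hq1 : 0 < q1)
    (hm3 : 2 ≤ m3)
    (u v : ℕ → ℕ → ℝ)
    (hu : YEq m1 m2 m3 d1 q1 r u v) (hv : YEq m1 m2 m3 d2 q2 r v u) :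
    ∀ t l, l + t = m3 → 1 ≤ l →
    (Yf m1 m2 m3 d1 q1 u 3 l * v 3 l - Yf m1 m2 m3 d2 q2 v 3 l * u 3 l)
        * ((d1 + q1) / d1) ^ ((l : ℤ) - (m3 : ℤ))
    = (Yf m1 m2 m3 d1 q1 u 3 m3 * v 3 m3 - Yf m1 m2 m3 d2 q2 v 3 m3 * u 3 m3)
      + (1 / d1) * ∑ k ∈ Finset.Icc (l + 1) m3,
          Yh m1 m2 m3 d1 q1 d2 q2 v 3 k * Yf m1 m2 m3 d1 q1 u 3 k
            * ((d1 + q1) / d1) ^ ((k : ℤ) - (m3 : ℤ) - 1) := by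
  have hρ : (d1 + q1) / d1 ≠ 0 := by positivity
  intro t
  induction t with
  | zero =>
    intro l hl _
    have : l = m3 := by omega
    subst this
    rw [Finset.Icc_eq_empty (by omega)]
    simp
  | succ t ih =>
    intro l hl h1
    have hlm : l + 1 ≤ m3 := by omega
    have ihl := ih (l + 1) (by omega) (by omega)
    have hf1 : Yf m1 m2 m3 d1 q1 u 3 (l + 1) = d1 * u 3 l - (d1 + q1) * u 3 (l + 1) := by
      rw [Yf_main (by omega) hlm, Nat.add_sub_cancel]
    have hg1 : Yf m1 m2 m3 d2 q2 v 3 (l + 1) = d2 * v 3 l - (d2 + q2) * v 3 (l + 1) := by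
      rw [Yf_main (by omega) hlm, Nat.add_sub_cancel]
    have hh1 : Yh m1 m2 m3 d1 q1 d2 q2 v 3 (l + 1)
        = (d1 - d2) * (v 3 l - v 3 (l + 1)) - (q1 - q2) * v 3 (l + 1) := by
      rw [Yh_main (by omega) hlm, Nat.add_sub_cancel]
    have hkey : d1 * (Yf m1 m2 m3 d1 q1 u 3 l * v 3 l - Yf m1 m2 m3 d2 q2 v 3 l * u 3 l)
        = (d1 + q1) * (Yf m1 m2 m3 d1 q1 u 3 (l + 1) * v 3 (l + 1)
            - Yf m1 m2 m3 d2 q2 v 3 (l + 1) * u 3 (l + 1))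
          + Yh m1 m2 m3 d1 q1 d2 q2 v 3 (l + 1) * Yf m1 m2 m3 d1 q1 u 3 (l + 1) := by
      obtain rfl | hl2 : l = 1 ∨ 2 ≤ l := by omega
      · -- downstream end
        have hEqU := hu.2.2.2.2.2.1
        have hEqV := hv.2.2.2.2.2.1
        rw [hf1, hg1, hh1, Yf_main_one, Yf_main_one]
        simp only [show (1 : ℕ) + 1 = 2 from rfl] at *
        linear_combination d1 * v 3 1 * hEqU - d1 * u 3 1 * hEqV
      · -- interior
        have hf0 : Yf m1 m2 m3 d1 q1 u 3 l = d1 * u 3 (l - 1) - (d1 + q1) * u 3 l :=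
          Yf_main hl2 (by omega)
        have hg0 : Yf m1 m2 m3 d2 q2 v 3 l = d2 * v 3 (l - 1) - (d2 + q2) * v 3 l :=
          Yf_main hl2 (by omega)
        have hEqU := hu.2.2.2.1 l hl2 (by omega)
        have hEqV := hv.2.2.2.1 l hl2 (by omega)
        rw [hf1, hg1, hh1, hf0, hg0]
        linear_combination d1 * v 3 l * hEqU - d1 * u 3 l * hEqV
    have hd1' : d1 ≠ 0 := ne_of_gt hd1
    have hkey' : Yf m1 m2 m3 d1 q1 u 3 l * v 3 l - Yf m1 m2 m3 d2 q2 v 3 l * u 3 l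
        = (d1 + q1) / d1 * (Yf m1 m2 m3 d1 q1 u 3 (l + 1) * v 3 (l + 1)
            - Yf m1 m2 m3 d2 q2 v 3 (l + 1) * u 3 (l + 1))
          + 1 / d1 * (Yh m1 m2 m3 d1 q1 d2 q2 v 3 (l + 1)
              * Yf m1 m2 m3 d1 q1 u 3 (l + 1)) := by
      field_simp
      linear_combination hkey
    have hsplit : Finset.Icc (l + 1) m3 = insert (l + 1) (Finset.Icc (l + 1 + 1) m3) := by
      ext x
      simp only [Finset.mem_Icc, Finset.mem_insert]
      omega
    rw [hsplit, Finset.sum_insert (by simp only [Finset.mem_Icc]; omega)]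
    have e1 : ((d1 + q1) / d1) ^ (((l + 1 : ℕ) : ℤ) - (m3 : ℤ))
        = ((d1 + q1) / d1) ^ (((l : ℕ) : ℤ) - (m3 : ℤ)) * ((d1 + q1) / d1) := by
      rw [show ((l + 1 : ℕ) : ℤ) - (m3 : ℤ) = (((l : ℕ) : ℤ) - (m3 : ℤ)) + 1 by push_cast; ring,
        zpow_add_one₀ hρ]
    have e2 : ((l + 1 : ℕ) : ℤ) - (m3 : ℤ) - 1 = ((l : ℕ) : ℤ) - (m3 : ℤ) := by push_cast; ring
    rw [e1] at ihl
    rw [e2]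
    linear_combination ihl + ((d1 + q1) / d1) ^ (((l : ℕ) : ℤ) - (m3 : ℤ)) * hkey'

lemma junction_id (m1 m2 m3 : ℕ) (d1 q1 d2 q2 r : ℝ)
    (hm1 : 1 ≤ m1) (hm2 : 1 ≤ m2) (hm3 : 2 ≤ m3)
    (u v : ℕ → ℕ → ℝ)
    (hu : YEq m1 m2 m3 d1 q1 r u v) (hv : YEq m1 m2 m3 d2 q2 r v u) :
    Yf m1 m2 m3 d1 q1 u 3 m3 * v 3 m3 - Yf m1 m2 m3 d2 q2 v 3 m3 * u 3 m3
      = (Yf m1 m2 m3 d1 q1 u 1 1 * v 1 0 - Yf m1 m2 m3 d2 q2 v 1 1 * u 1 0)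
        + (Yf m1 m2 m3 d1 q1 u 2 1 * v 2 0 - Yf m1 m2 m3 d2 q2 v 2 1 * u 2 0) := by
  have h11 : seg m1 m2 m3 1 = m1 := by simp [seg]
  have h22 : seg m1 m2 m3 2 = m2 := by simp [seg]
  have hf3 : Yf m1 m2 m3 d1 q1 u 3 m3 = d1 * u 3 (m3 - 1) - (d1 + q1) * u 3 m3 :=
    Yf_main hm3 le_rfl
  have hg3 : Yf m1 m2 m3 d2 q2 v 3 m3 = d2 * v 3 (m3 - 1) - (d2 + q2) * v 3 m3 :=
    Yf_main hm3 le_rfl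
  have hfu1 : Yf m1 m2 m3 d1 q1 u 1 1 = d1 * u 1 0 - (d1 + q1) * u 1 1 :=
    Yf_branch (by omega) le_rfl (by omega)
  have hfu2 : Yf m1 m2 m3 d1 q1 u 2 1 = d1 * u 2 0 - (d1 + q1) * u 2 1 :=
    Yf_branch (by omega) le_rfl (by omega)
  have hgv1 : Yf m1 m2 m3 d2 q2 v 1 1 = d2 * v 1 0 - (d2 + q2) * v 1 1 :=
    Yf_branch (by omega) le_rfl (by omega)
  have hgv2 : Yf m1 m2 m3 d2 q2 v 2 1 = d2 * v 2 0 - (d2 + q2) * v 2 1 :=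
    Yf_branch (by omega) le_rfl (by omega)
  have hJU := hu.2.2.2.2.2.2
  have hJV := hv.2.2.2.2.2.2
  rw [hf3, hg3, hfu1, hfu2, hgv1, hgv2, hu.1, hu.2.1, hv.1, hv.2.1]
  linear_combination v 3 m3 * hJU - u 3 m3 * hJV


/-- **Lemma 3.1** (identity (3.2)). -/
theorem stmt_0
    (m1 m2 m3 : ℕ) (d1 q1 d2 q2 r : ℝ)
    (hm1 : 1 ≤ m1) (hm12 : m1 ≤ m2) (hm3 : 2 ≤ m3)
    (hd1 : 0 < d1) (hq1 : 0 < q1) (hd2 : 0 < d2) (hq2 : 0 < q2) (hr : 0 < r)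
    (u v : ℕ → ℕ → ℝ)
    (heq : YPosEquilibrium m1 m2 m3 d1 q1 d2 q2 r u v)
    (lstar l1 l2 : ℕ)
    (hls : 1 ≤ lstar) (hls' : lstar ≤ m3) (hl1 : l1 ≤ m1) (hl2 : l2 ≤ m2) :
    (Yf m1 m2 m3 d1 q1 u 3 lstar * v 3 lstar - Yf m1 m2 m3 d2 q2 v 3 lstar * u 3 lstar)
        * ((d1 + q1) / d1) ^ ((lstar : ℤ) - (m3 : ℤ))
      - ((Yf m1 m2 m3 d1 q1 u 1 (l1 + 1) * v 1 l1 - Yf m1 m2 m3 d2 q2 v 1 (l1 + 1) * u 1 l1)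
            * ((d1 + q1) / d1) ^ (l1 : ℤ)
          + (Yf m1 m2 m3 d1 q1 u 2 (l2 + 1) * v 2 l2 - Yf m1 m2 m3 d2 q2 v 2 (l2 + 1) * u 2 l2)
            * ((d1 + q1) / d1) ^ (l2 : ℤ))
    = (1 / d1) * ((∑ k ∈ Finset.Icc 1 l1,
          Yh m1 m2 m3 d1 q1 d2 q2 v 1 k * Yf m1 m2 m3 d1 q1 u 1 k
            * ((d1 + q1) / d1) ^ ((k : ℤ) - 1))
        + ∑ k ∈ Finset.Icc 1 l2,
          Yh m1 m2 m3 d1 q1 d2 q2 v 2 k * Yf m1 m2 m3 d1 q1 u 2 k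
            * ((d1 + q1) / d1) ^ ((k : ℤ) - 1))
      + (1 / d1) * ∑ k ∈ Finset.Icc (lstar + 1) m3,
          Yh m1 m2 m3 d1 q1 d2 q2 v 3 k * Yf m1 m2 m3 d1 q1 u 3 k
            * ((d1 + q1) / d1) ^ ((k : ℤ) - (m3 : ℤ) - 1) := by
  obtain ⟨hup, hvp, hu, hv⟩ := heq
  have hm2 : 1 ≤ m2 := le_trans hm1 hm12
  have hb1 := branch_id m1 m2 m3 d1 q1 d2 q2 r hd1 hq1 u v hu hv 1 (Or.inl rfl) l1
    (by simpa [seg] using hl1)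
  have hb2 := branch_id m1 m2 m3 d1 q1 d2 q2 r hd1 hq1 u v hu hv 2 (Or.inr rfl) l2
    (by simpa [seg] using hl2)
  have h3 := main_id m1 m2 m3 d1 q1 d2 q2 r hd1 hq1 hm3 u v hu hv (m3 - lstar) lstar
    (by omega) hls
  have hj := junction_id m1 m2 m3 d1 q1 d2 q2 r hm1 hm2 hm3 u v hu hv
  rw [hb1, hb2, h3, hj]
  ring
end
end

section
/- (Lemma 3.2(i)) Assume (d2,q2) ∈ S1 and let (u,v) be a positive equilibrium. If there exists l with 2 ≤ l ≤ m3 such that f^3_l ≥ 0, then g^3_l ≥ 0 in case l = 2, and g^3_l > 0 in case 2 < l ≤ m3. -/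
open Finset Filter

noncomputable section

/-- Auxiliary flux sequence on the main segment, defined for all `k` (zero for `k ≤ 1`). -/
def auxF (d q : ℝ) (w : ℕ → ℕ → ℝ) (k : ℕ) : ℝ :=
  if 2 ≤ k then d * w 3 (k - 1) - (d + q) * w 3 k else 0

lemma auxF_rec (m1 m2 m3 : ℕ) (d q r : ℝ) (w c : ℕ → ℕ → ℝ)
    (h : YEq m1 m2 m3 d q r w c) (k : ℕ) (h1 : 1 ≤ k) (h2 : k + 1 ≤ m3) :
    auxF d q w (k + 1) = auxF d q w k + w 3 k * (r - w 3 k - c 3 k) := by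
  rcases Nat.lt_or_ge k 2 with hk | hk
  · have hk1 : k = 1 := by omega
    subst hk1
    have hdown := h.2.2.2.2.2.1
    norm_num [auxF]
    linarith
  · have hint := h.2.2.2.1 k hk h2
    have e1 : auxF d q w (k + 1) = d * w 3 k - (d + q) * w 3 (k + 1) := by
      simp [auxF, Nat.add_sub_cancel, show 2 ≤ k + 1 by omega]
    have e2 : auxF d q w k = d * w 3 (k - 1) - (d + q) * w 3 k := by
      simp [auxF, hk]
    rw [e1, e2]
    linarith

set_option maxHeartbeats 2000000 in
/-- **Lemma 3.2(i)**. -/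
theorem stmt_1
    (m1 m2 m3 : ℕ) (d1 q1 d2 q2 r : ℝ)
    (hm1 : 1 ≤ m1) (hm12 : m1 ≤ m2) (hm3 : 2 ≤ m3)
    (hd1 : 0 < d1) (hq1 : 0 < q1) (hr : 0 < r)
    (hS1 : S1mem d1 q1 d2 q2)
    (u v : ℕ → ℕ → ℝ)
    (heq : YPosEquilibrium m1 m2 m3 d1 q1 d2 q2 r u v)
    (l : ℕ) (hl : 2 ≤ l) (hl' : l ≤ m3)
    (hf : 0 ≤ Yf m1 m2 m3 d1 q1 u 3 l) :
    (l = 2 → 0 ≤ Yf m1 m2 m3 d2 q2 v 3 l) ∧ (2 < l → 0 < Yf m1 m2 m3 d2 q2 v 3 l) := by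
  obtain ⟨hupos, hvpos, hequ, heqv⟩ := heq
  obtain ⟨hd2, hd21, hq2, hq2b, hne⟩ := hS1
  -- basic consequences of S1
  have hq1d1 : q2 * d1 ≤ q1 * d2 := by
    have h := mul_le_mul_of_nonneg_right hq2b hd1.le
    have h2 : q1 / d1 * d2 * d1 = q1 * d2 := by field_simp
    linarith
  have hC : 0 ≤ q1 * d2 - q2 * d1 := by linarith
  have hq21 : q2 ≤ q1 := by nlinarith
  have he : 0 < d1 + q1 - d2 - q2 := by
    rcases eq_or_lt_of_le hd21 with hdd | hdd
    · have hqq : q2 ≠ q1 := by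
        intro hq
        apply hne
        rw [hdd, hq]
      have : q2 < q1 := lt_of_le_of_ne hq21 hqq
      linarith
    · linarith
  -- positivity of u, v on segment 3
  have hseg3 : seg m1 m2 m3 3 = m3 := by simp [seg]
  have hU : ∀ k, 1 ≤ k → k ≤ m3 → 0 < u 3 k := by
    intro k h1 h2
    exact hupos 3 k (by norm_num) h1 (by rw [hseg3]; exact h2)
  have hV : ∀ k, 1 ≤ k → k ≤ m3 → 0 < v 3 k := by
    intro k h1 h2
    exact hvpos 3 k (by norm_num) h1 (by rw [hseg3]; exact h2)
  -- the main induction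
  have main : ∀ k, 1 ≤ k → k ≤ m3 →
      ((0 ≤ auxF d1 q1 u k → 0 ≤ auxF d2 q2 v k ∧
         (2 ≤ k → 0 ≤ r - u 3 (k - 1) - v 3 (k - 1)) ∧
         (3 ≤ k → 0 < auxF d2 q2 v k ∧ 0 < r - u 3 (k - 1) - v 3 (k - 1))) ∧
       (auxF d1 q1 u k < 0 → auxF d1 q1 u k * v 3 k < auxF d2 q2 v k * u 3 k)) := by
    intro k
    induction k with
    | zero => intro h; exact absurd h (by norm_num)
    | succ n ih =>
      intro _ hn1m
      rcases Nat.eq_zero_or_pos n with hn0 | hn1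
      · subst hn0
        constructor
        · intro _
          refine ⟨by norm_num [auxF], ?_, ?_⟩
          · intro h; exact absurd h (by norm_num)
          · intro h; exact absurd h (by norm_num)
        · intro h; norm_num [auxF] at h
      · have hnm : n ≤ m3 := by omega
        obtain ⟨IH1, IH2⟩ := ih hn1 hnm
        have recf := auxF_rec m1 m2 m3 d1 q1 r u v hequ n hn1 hn1m
        have recgE0 := auxF_rec m1 m2 m3 d2 q2 r v u heqv n hn1 hn1m
        have recg : auxF d2 q2 v (n + 1) =
            auxF d2 q2 v n + v 3 n * (r - u 3 n - v 3 n) := by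
          linear_combination recgE0
        have hUn : 0 < u 3 n := hU n hn1 hnm
        have hVn : 0 < v 3 n := hV n hn1 hnm
        have hUn1 : 0 < u 3 (n + 1) := hU (n + 1) (by omega) hn1m
        have hVn1 : 0 < v 3 (n + 1) := hV (n + 1) (by omega) hn1m
        have deff : auxF d1 q1 u (n + 1) = d1 * u 3 n - (d1 + q1) * u 3 (n + 1) := by
          simp [auxF, Nat.add_sub_cancel, show 2 ≤ n + 1 by omega]
        have defg : auxF d2 q2 v (n + 1) = d2 * v 3 n - (d2 + q2) * v 3 (n + 1) := by
          simp [auxF, Nat.add_sub_cancel, show 2 ≤ n + 1 by omega]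
        -- key fact: if 0 ≤ f n and 2 ≤ n then 0 < r - u 3 n - v 3 n
        have keyF : 0 ≤ auxF d1 q1 u n → 2 ≤ n → 0 < r - u 3 n - v 3 n := by
          intro hfn hn2
          obtain ⟨hgn, hF2, _⟩ := IH1 hfn
          have hFprev : 0 ≤ r - u 3 (n - 1) - v 3 (n - 1) := hF2 hn2
          have deffn : auxF d1 q1 u n = d1 * u 3 (n - 1) - (d1 + q1) * u 3 n := by
            simp [auxF, hn2]
          have defgn : auxF d2 q2 v n = d2 * v 3 (n - 1) - (d2 + q2) * v 3 n := by
            simp [auxF, hn2]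
          have hUp : 0 < u 3 (n - 1) := hU (n - 1) (by omega) (by omega)
          have hVp : 0 < v 3 (n - 1) := hV (n - 1) (by omega) (by omega)
          have hUdec : u 3 n < u 3 (n - 1) := by nlinarith [mul_pos hq1 hUn]
          have hVdec : v 3 n < v 3 (n - 1) := by nlinarith [mul_pos hq2 hVn]
          linarith
        constructor
        · intro hf1
          by_cases hfn : 0 ≤ auxF d1 q1 u n
          · rcases Nat.lt_or_ge n 2 with hn2 | hn2
            · have hn1' : n = 1 := by omega
              subst hn1'
              have hf10 : auxF d1 q1 u 1 = 0 := by norm_num [auxF]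
              have hg10 : auxF d2 q2 v 1 = 0 := by norm_num [auxF]
              have hF : 0 ≤ r - u 3 1 - v 3 1 := by
                rw [recf, hf10] at hf1
                nlinarith
              refine ⟨?_, fun _ => by simpa using hF, fun h3 => absurd h3 (by norm_num)⟩
              rw [recg, hg10]
              nlinarith [mul_nonneg hVn.le hF]
            · have hgn : 0 ≤ auxF d2 q2 v n := (IH1 hfn).1
              have hF : 0 < r - u 3 n - v 3 n := keyF hfn hn2
              have hg1 : 0 < auxF d2 q2 v (n + 1) := by
                rw [recg]
                nlinarith [mul_pos hVn hF]
              refine ⟨hg1.le, fun _ => ?_, fun _ => ⟨hg1, ?_⟩⟩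
              · simpa [Nat.add_sub_cancel] using hF.le
              · simpa [Nat.add_sub_cancel] using hF
          · push_neg at hfn
            have hD := IH2 hfn
            have hF : 0 < r - u 3 n - v 3 n := by
              by_contra hc
              push_neg at hc
              have : u 3 n * (r - u 3 n - v 3 n) ≤ 0 :=
                mul_nonpos_of_nonneg_of_nonpos hUn.le hc
              rw [recf] at hf1
              linarith
            have hg1 : 0 < auxF d2 q2 v (n + 1) := by
              have h1 : 0 < u 3 n * auxF d2 q2 v (n + 1) := by
                have e1 : u 3 n * auxF d2 q2 v (n + 1) =
                    u 3 n * auxF d2 q2 v n + v 3 n * (u 3 n * (r - u 3 n - v 3 n)) := by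
                  rw [recg]; ring
                have e2 : u 3 n * (r - u 3 n - v 3 n) =
                    auxF d1 q1 u (n + 1) - auxF d1 q1 u n := by
                  rw [recf]; ring
                rw [e2] at e1
                nlinarith [mul_nonneg hVn.le hf1, mul_pos hVn (neg_pos.mpr hfn)]
              nlinarith
            refine ⟨hg1.le, fun _ => ?_, fun _ => ⟨hg1, ?_⟩⟩
            · simpa [Nat.add_sub_cancel] using hF.le
            · simpa [Nat.add_sub_cancel] using hF
        · intro hf1
          rcases lt_or_ge 0 (auxF d2 q2 v (n + 1)) with hg1 | hg1
          · have h1 : auxF d1 q1 u (n + 1) * v 3 (n + 1) < 0 :=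
              mul_neg_of_neg_of_pos hf1 hVn1
            have h2 : 0 < auxF d2 q2 v (n + 1) * u 3 (n + 1) := mul_pos hg1 hUn1
            linarith
          · have H1 : auxF d1 q1 u (n + 1) * v 3 n ≤ auxF d2 q2 v (n + 1) * u 3 n := by
              by_cases hfn : 0 ≤ auxF d1 q1 u n
              · rcases Nat.lt_or_ge n 2 with hn2 | hn2
                · have hn1' : n = 1 := by omega
                  subst hn1'
                  have hf10 : auxF d1 q1 u 1 = 0 := by norm_num [auxF]
                  have hg10 : auxF d2 q2 v 1 = 0 := by norm_num [auxF]
                  have heq' : auxF d1 q1 u (1 + 1) * v 3 1 =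
                      auxF d2 q2 v (1 + 1) * u 3 1 := by
                    rw [recf, recg, hf10, hg10]; ring
                  exact le_of_eq heq'
                · exfalso
                  have hgn : 0 ≤ auxF d2 q2 v n := (IH1 hfn).1
                  have hF : 0 < r - u 3 n - v 3 n := keyF hfn hn2
                  have : 0 < auxF d2 q2 v (n + 1) := by
                    rw [recg]
                    nlinarith [mul_pos hVn hF]
                  linarith
              · push_neg at hfn
                have hD := IH2 hfn
                have e1 : auxF d1 q1 u (n + 1) * v 3 n - auxF d2 q2 v (n + 1) * u 3 n =
                    auxF d1 q1 u n * v 3 n - auxF d2 q2 v n * u 3 n := by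
                  rw [recf, recg]; ring
                linarith
            set A := auxF d1 q1 u (n + 1) with hA
            set B := auxF d2 q2 v (n + 1) with hB
            have hAneg : 0 < -A := neg_pos.mpr hf1
            have hΔ : 0 < d1 * (d2 + q2) * B * u 3 n - d2 * (d1 + q1) * A * v 3 n
                + (d1 + q1 - d2 - q2) * A * B := by
              rcases le_or_gt 0 ((d1 + q1 - d2 - q2) * A + d1 * (d2 + q2) * u 3 n) with hM | hM
              · have T1 : 0 ≤ (B * u 3 n - A * v 3 n) *
                    ((d1 + q1 - d2 - q2) * A + d1 * (d2 + q2) * u 3 n) :=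
                  mul_nonneg (by linarith) hM
                have T2 : 0 < (d1 + q1 - d2 - q2) * ((-A) * (-A)) * v 3 n :=
                  mul_pos (mul_pos he (mul_pos hAneg hAneg)) hVn
                have T3 : 0 ≤ (q1 * d2 - q2 * d1) * (-A) * (u 3 n * v 3 n) :=
                  mul_nonneg (mul_nonneg hC hAneg.le) (mul_pos hUn hVn).le
                have idd : (d1 * (d2 + q2) * B * u 3 n - d2 * (d1 + q1) * A * v 3 n
                    + (d1 + q1 - d2 - q2) * A * B) * u 3 n =
                    (d1 + q1 - d2 - q2) * ((-A) * (-A)) * v 3 n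
                    + (q1 * d2 - q2 * d1) * (-A) * (u 3 n * v 3 n)
                    + (B * u 3 n - A * v 3 n) *
                      ((d1 + q1 - d2 - q2) * A + d1 * (d2 + q2) * u 3 n) := by ring
                nlinarith [idd, T1, T2, T3, hUn]
              · have hBU : 0 ≤ -(B * u 3 n) := by
                  nlinarith [mul_nonneg (neg_nonneg.mpr hg1) hUn.le]
                have T1 : 0 ≤ (-(B * u 3 n)) * (-((d1 + q1 - d2 - q2) * A +
                    d1 * (d2 + q2) * u 3 n)) :=
                  mul_nonneg hBU (by linarith)
                have T2 : 0 < d2 * (d1 + q1) * (-A) * (v 3 n * u 3 n) :=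
                  mul_pos (mul_pos (mul_pos hd2 (by linarith)) hAneg) (mul_pos hVn hUn)
                have idd : (d1 * (d2 + q2) * B * u 3 n - d2 * (d1 + q1) * A * v 3 n
                    + (d1 + q1 - d2 - q2) * A * B) * u 3 n =
                    (-(B * u 3 n)) * (-((d1 + q1 - d2 - q2) * A + d1 * (d2 + q2) * u 3 n))
                    + d2 * (d1 + q1) * (-A) * (v 3 n * u 3 n) := by ring
                nlinarith [idd, T1, T2, hUn]
            have idd2 : (d1 + q1) * (d2 + q2) * (B * u 3 (n + 1) - A * v 3 (n + 1)) =
                d1 * (d2 + q2) * B * u 3 n - d2 * (d1 + q1) * A * v 3 n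
                + (d1 + q1 - d2 - q2) * A * B := by
              linear_combination (d2 + q2) * B * deff - (d1 + q1) * A * defg
            have hpq : 0 < (d1 + q1) * (d2 + q2) := by positivity
            nlinarith [idd2, hΔ, hpq]
  -- conclude
  have eYfu : Yf m1 m2 m3 d1 q1 u 3 l = auxF d1 q1 u l := by
    simp [Yf, auxF, hl, hl']
  have eYfv : Yf m1 m2 m3 d2 q2 v 3 l = auxF d2 q2 v l := by
    simp [Yf, auxF, hl, hl']
  have hfl : 0 ≤ auxF d1 q1 u l := by rwa [eYfu] at hf
  obtain ⟨P1, _⟩ := main l (by omega) hl'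
  obtain ⟨hg0, _, hstrict⟩ := P1 hfl
  constructor
  · intro _
    rw [eYfv]
    exact hg0
  · intro h2l
    rw [eYfv]
    exact (hstrict (by omega)).1
end
end

section
/- (Lemma 3.2(ii)) Assume (d2,q2) ∈ S1 and let (u,v) be a positive equilibrium. For fixed i ∈ {1,2}, if there exists l with 1 ≤ l ≤ m_i such that f^i_l ≤ 0, then g^i_l ≤ 0 in case l = m_i, and g^i_l < 0 in case 1 ≤ l < m_i. -/
open Finset Filter

noncomputable section

/-! Along a branch the inflows `F = f`, `G = g` satisfy `F_{k+1} = F_k + u_k (r - u_k - v_k)`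
(likewise `G`), so `G_k u_k - F_k v_k = G_{k+1} u_k - F_{k+1} v_k`. Eliminating `u_k, v_k` through
`d₁ u_k = (d₁ + q₁) u_{k+1} + F_{k+1}` and its analogue for `v` gives
`d₁ d₂ (G_k u_k - F_k v_k) = d₂ (d₁ + q₁) (G_{k+1} u_{k+1} - F_{k+1} v_{k+1})`
`  + (d₂ q₁ - d₁ q₂) F_{k+1} v_{k+1} - (d₁ - d₂) F_{k+1} G_{k+1}`,
whose last two coefficients are nonnegative on `S1` and not both zero. This lets the sign pattern
`FluxPattern` travel from the upstream end down the branch, and one step of it gives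
`G_l u_l < F_l v_l` or `F_l > 0`; either forces `G_l < 0` once `F_l ≤ 0`. -/

/-- Net inflow into patch `k` of a branch from its downstream neighbour `k - 1`. -/
def flux (d q : ℝ) (W : ℕ → ℝ) (k : ℕ) : ℝ := d * W (k - 1) - (d + q) * W k

lemma flux_succ (d q : ℝ) (W : ℕ → ℝ) (k : ℕ) :
    d * W k = (d + q) * W (k + 1) + flux d q W (k + 1) := by
  simp only [flux, Nat.add_sub_cancel]; ring

/-- The equilibrium equations of `W` (competitor `C`) along a branch `1, …, m` whose upstream
end is `m`, written as a balance of fluxes. -/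
def BranchEq (d q r : ℝ) (m : ℕ) (W C : ℕ → ℝ) : Prop :=
  (∀ k, 1 ≤ k → k < m → flux d q W (k + 1) = flux d q W k + W k * (r - W k - C k)) ∧
  flux d q W m + W m * (r - W m - C m) = 0

lemma YEq.branchEq {m1 m2 m3 : ℕ} {d q r : ℝ} {w c : ℕ → ℕ → ℝ}
    (h : YEq m1 m2 m3 d q r w c) {i : ℕ} (hi : i = 1 ∨ i = 2) :
    BranchEq d q r (seg m1 m2 m3 i) (w i) (c i) := by
  obtain ⟨-, -, hint, -, htop, -⟩ := h
  refine ⟨fun k hk hkm => ?_, ?_⟩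
  · simp only [flux, Nat.add_sub_cancel]
    linear_combination -hint i hi k hk hkm
  · simp only [flux]
    linear_combination htop i hi

lemma Yf_eq_flux {m1 m2 m3 : ℕ} {d q : ℝ} {w : ℕ → ℕ → ℝ} {i k : ℕ} (hi : i = 1 ∨ i = 2)
    (hk : 1 ≤ k) (hkm : k ≤ seg m1 m2 m3 i) : Yf m1 m2 m3 d q w i k = flux d q (w i) k := by
  have hi3 : i ≠ 3 := by omega
  simp only [Yf, flux, if_neg hi3, if_pos (And.intro hk hkm)]

lemma S1mem.mul_le_mul {d1 q1 d q : ℝ} (hd1 : 0 < d1) (h : S1mem d1 q1 d q) :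
    d1 * q ≤ d * q1 := by
  have := h.2.2.2.1
  rw [div_mul_eq_mul_div, le_div_iff₀ hd1] at this
  linarith

lemma S1mem.lt_or_lt {d1 q1 d q : ℝ} (hd1 : 0 < d1) (h : S1mem d1 q1 d q) :
    d < d1 ∨ d1 * q < d * q1 := by
  rcases h.2.1.lt_or_eq with hd | rfl
  · exact Or.inl hd
  · refine Or.inr ((h.mul_le_mul hd1).lt_of_ne fun hq => h.2.2.2.2 ?_)
    rw [mul_right_inj' hd1.ne'] at hq
    rw [hq]

/-- The sign pattern that propagates downstream along a branch, for densities `u, v`, inflows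
`F, G` and local growth rate `R = r - u - v` at a patch: either `v` flows downstream with a
per-capita inflow `G / v ≤ F / u` (and not both inflows vanish), or both species flow upstream
into a crowded patch. -/
def FluxPattern (F G u v R : ℝ) : Prop :=
  (G ≤ 0 ∧ G * u ≤ F * v ∧ (F ≠ 0 ∨ G ≠ 0)) ∨ (0 ≤ F ∧ 0 ≤ G ∧ R ≤ 0)

lemma fluxPattern_of_top {F G u v R : ℝ} (hu : 0 < u) (hv : 0 < v)
    (hF : F + u * R = 0) (hG : G + v * R = 0) : FluxPattern F G u v R := by
  rcases lt_or_ge 0 R with hR | hR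
  · left
    refine ⟨by nlinarith, by linear_combination u * hG - v * hF, Or.inl ?_⟩
    nlinarith
  · right
    exact ⟨by nlinarith, by nlinarith, hR⟩

/-! In the step lemmas below, unprimed quantities live at patch `j` and primed ones at `j + 1`. -/

section Step

variable {d1 q1 d2 q2 r u v u' v' F G F' G' : ℝ}

lemma cross_lt_of_drift (hd1 : 0 < d1) (hq1 : 0 ≤ q1) (hd2 : 0 < d2) (hdd : d2 ≤ d1)
    (hqd : d1 * q2 ≤ d2 * q1) (hne : d2 < d1 ∨ d1 * q2 < d2 * q1)
    (hu : 0 < u) (hv : 0 < v) (hu' : 0 < u') (hv' : 0 < v')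
    (hU : d1 * u = (d1 + q1) * u' + F') (hV : d2 * v = (d2 + q2) * v' + G')
    (hG' : G' ≤ 0) (hZ' : G' * u' ≤ F' * v') (hFG' : F' ≠ 0 ∨ G' ≠ 0) :
    G' * u < F' * v := by
  rcases lt_or_ge 0 F' with hF' | hF'
  · nlinarith [mul_pos hF' hv]
  have key : d1 * d2 * (G' * u - F' * v) = d2 * (d1 + q1) * (G' * u' - F' * v')
      + (d2 * q1 - d1 * q2) * (F' * v') - (d1 - d2) * (F' * G') := by
    linear_combination d2 * G' * hU - d1 * F' * hV
  have hFv : F' * v' ≤ 0 := mul_nonpos_of_nonpos_of_nonneg hF' hv'.le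
  have hFG : 0 ≤ F' * G' := mul_nonneg_of_nonpos_of_nonpos hF' hG'
  have hdd' : 0 < d1 * d2 := mul_pos hd1 hd2
  suffices d1 * d2 * (G' * u - F' * v) < 0 by nlinarith
  have hT2 : (d2 * q1 - d1 * q2) * (F' * v') ≤ 0 :=
    mul_nonpos_of_nonneg_of_nonpos (by linarith) hFv
  have hT3 : 0 ≤ (d1 - d2) * (F' * G') := mul_nonneg (by linarith) hFG
  rcases hZ'.lt_or_eq with hZ' | hZ'
  · have hT1 : d2 * (d1 + q1) * (G' * u' - F' * v') < 0 :=
      mul_neg_of_pos_of_neg (by positivity) (by linarith)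
    linarith
  -- equal per-capita inflows force both inflows to be negative, so the strict inequality bites
  have hT1 : d2 * (d1 + q1) * (G' * u' - F' * v') = 0 := by rw [hZ', sub_self, mul_zero]
  have hF'neg : F' < 0 := hF'.lt_of_ne fun h0 => by
    subst h0
    exact hFG'.elim (· rfl) fun h => h (by nlinarith)
  have hG'neg : G' < 0 := by nlinarith [mul_neg_of_neg_of_pos hF'neg hv']
  rcases hne with h | h
  · have := mul_pos (sub_pos.2 h) (mul_pos_of_neg_of_neg hF'neg hG'neg)
    linarith
  · have := mul_neg_of_pos_of_neg (sub_pos.2 h) (mul_neg_of_neg_of_pos hF'neg hv')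
    linarith

lemma outflow_of_crowded (hd1 : 0 < d1) (hq1 : 0 < q1) (hd2 : 0 < d2) (hq2 : 0 ≤ q2)
    (hu' : 0 < u') (hv' : 0 < v') (hu : 0 < u)
    (hU : d1 * u = (d1 + q1) * u' + F') (hV : d2 * v = (d2 + q2) * v' + G')
    (hF : F' = F + u * (r - u - v))
    (hF' : 0 ≤ F') (hG' : 0 ≤ G') (hR' : r - u' - v' ≤ 0) :
    0 < F ∧ r - u - v < 0 := by
  have hu'u : u' < u := by nlinarith
  have hv'v : v' ≤ v := by nlinarith
  have hR : r - u - v < 0 := by linarith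
  exact ⟨by nlinarith, hR⟩

lemma fluxPattern_succ_cases (hd1 : 0 < d1) (hq1 : 0 < q1) (hS1 : S1mem d1 q1 d2 q2)
    (hu : 0 < u) (hv : 0 < v) (hu' : 0 < u') (hv' : 0 < v')
    (hU : d1 * u = (d1 + q1) * u' + F') (hV : d2 * v = (d2 + q2) * v' + G')
    (hF : F' = F + u * (r - u - v)) (hG : G' = G + v * (r - u - v))
    (h : FluxPattern F' G' u' v' (r - u' - v')) :
    (G' ≤ 0 ∧ G * u < F * v) ∨ (0 < F ∧ r - u - v < 0) := by
  rcases h with ⟨hG', hZ', hFG'⟩ | ⟨hF', hG', hR'⟩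
  · have := cross_lt_of_drift hd1 hq1.le hS1.1 hS1.2.1 (hS1.mul_le_mul hd1) (hS1.lt_or_lt hd1)
      hu hv hu' hv' hU hV hG' hZ' hFG'
    exact Or.inl ⟨hG', by rw [hF, hG] at this; linarith⟩
  · exact Or.inr (outflow_of_crowded hd1 hq1 hS1.1 hS1.2.2.1.le hu' hv' hu hU hV hF hF' hG' hR')

lemma fluxPattern_of_succ (hu : 0 < u) (hv : 0 < v) (hG : G' = G + v * (r - u - v))
    (h : (G' ≤ 0 ∧ G * u < F * v) ∨ (0 < F ∧ r - u - v < 0)) :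
    FluxPattern F G u v (r - u - v) := by
  rcases h with ⟨hG', hZ⟩ | ⟨hF, hR⟩
  · rcases le_or_gt G 0 with hG0 | hG0
    · exact Or.inl ⟨hG0, hZ.le, by by_contra! h; simp [h.1, h.2] at hZ⟩
    · right
      have : v * (r - u - v) < 0 := by linarith
      exact ⟨by nlinarith [mul_pos hG0 hu], hG0.le, (neg_of_mul_neg_right this hv.le).le⟩
  · rcases le_or_gt 0 G with hG0 | hG0
    · exact Or.inr ⟨hF.le, hG0, hR.le⟩
    · exact Or.inl ⟨hG0.le, by nlinarith [mul_pos hF hv, mul_neg_of_neg_of_pos hG0 hu],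
        Or.inl hF.ne'⟩

lemma flux_neg_of_succ (hu : 0 < u) (hv : 0 < v) (hF : F ≤ 0)
    (h : (G' ≤ 0 ∧ G * u < F * v) ∨ (0 < F ∧ r - u - v < 0)) : G < 0 := by
  rcases h with ⟨-, hZ⟩ | ⟨hF', -⟩
  · nlinarith [mul_nonpos_of_nonpos_of_nonneg hF hv.le]
  · linarith

end Step

section Branch

variable {d1 q1 d2 q2 r : ℝ} {m : ℕ} {U V : ℕ → ℝ}

lemma BranchEq.succ_cases (hUeq : BranchEq d1 q1 r m U V) (hVeq : BranchEq d2 q2 r m V U)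
    (hd1 : 0 < d1) (hq1 : 0 < q1) (hS1 : S1mem d1 q1 d2 q2)
    (hU : ∀ k, 1 ≤ k → k ≤ m → 0 < U k) (hV : ∀ k, 1 ≤ k → k ≤ m → 0 < V k)
    {j : ℕ} (hj : 1 ≤ j) (hjm : j < m)
    (h : FluxPattern (flux d1 q1 U (j + 1)) (flux d2 q2 V (j + 1)) (U (j + 1)) (V (j + 1))
      (r - U (j + 1) - V (j + 1))) :
    (flux d2 q2 V (j + 1) ≤ 0 ∧ flux d2 q2 V j * U j < flux d1 q1 U j * V j) ∨
      (0 < flux d1 q1 U j ∧ r - U j - V j < 0) :=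
  fluxPattern_succ_cases hd1 hq1 hS1 (hU j hj hjm.le) (hV j hj hjm.le) (hU _ (by omega) hjm)
    (hV _ (by omega) hjm) (flux_succ d1 q1 U j) (flux_succ d2 q2 V j) (hUeq.1 j hj hjm)
    (by rw [hVeq.1 j hj hjm]; ring) h

lemma BranchEq.fluxPattern (hUeq : BranchEq d1 q1 r m U V) (hVeq : BranchEq d2 q2 r m V U)
    (hd1 : 0 < d1) (hq1 : 0 < q1) (hS1 : S1mem d1 q1 d2 q2)
    (hU : ∀ k, 1 ≤ k → k ≤ m → 0 < U k) (hV : ∀ k, 1 ≤ k → k ≤ m → 0 < V k)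
    {j : ℕ} (hj : 1 ≤ j) (hjm : j ≤ m) :
    FluxPattern (flux d1 q1 U j) (flux d2 q2 V j) (U j) (V j) (r - U j - V j) := by
  refine Nat.decreasingInduction'
    (P := fun k => FluxPattern (flux d1 q1 U k) (flux d2 q2 V k) (U k) (V k) (r - U k - V k))
    (fun k hkm hjk ih => ?_) hjm ?_
  · have hk : 1 ≤ k := hj.trans hjk
    exact fluxPattern_of_succ (hU k hk hkm.le) (hV k hk hkm.le) (by rw [hVeq.1 k hk hkm]; ring)
      (hUeq.succ_cases hVeq hd1 hq1 hS1 hU hV hk hkm ih)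
  · have hm : 1 ≤ m := hj.trans hjm
    exact fluxPattern_of_top (hU m hm le_rfl) (hV m hm le_rfl) hUeq.2
      (by linear_combination hVeq.2)

lemma BranchEq.flux_sign (hUeq : BranchEq d1 q1 r m U V) (hVeq : BranchEq d2 q2 r m V U)
    (hd1 : 0 < d1) (hq1 : 0 < q1) (hS1 : S1mem d1 q1 d2 q2)
    (hU : ∀ k, 1 ≤ k → k ≤ m → 0 < U k) (hV : ∀ k, 1 ≤ k → k ≤ m → 0 < V k)
    {l : ℕ} (hl : 1 ≤ l) (hlm : l ≤ m) (hF : flux d1 q1 U l ≤ 0) :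
    (l = m → flux d2 q2 V l ≤ 0) ∧ (l < m → flux d2 q2 V l < 0) := by
  refine ⟨fun hl_eq => ?_, fun hlt => ?_⟩
  · subst hl_eq
    have hR : 0 ≤ r - U l - V l := by nlinarith [hUeq.2, hU l hl le_rfl]
    nlinarith [hVeq.2, mul_nonneg (hV l hl le_rfl).le hR]
  · exact flux_neg_of_succ (hU l hl hlm) (hV l hl hlm) hF (hUeq.succ_cases hVeq hd1 hq1 hS1 hU hV
      hl hlt (hUeq.fluxPattern hVeq hd1 hq1 hS1 hU hV (by omega) hlt))

end Branch

theorem stmt_2_general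
    (m1 m2 m3 : ℕ) (d1 q1 d2 q2 r : ℝ)
    (hd1 : 0 < d1) (hq1 : 0 < q1)
    (hS1 : S1mem d1 q1 d2 q2)
    (u v : ℕ → ℕ → ℝ)
    (heq : YPosEquilibrium m1 m2 m3 d1 q1 d2 q2 r u v)
    (i : ℕ) (hi : i = 1 ∨ i = 2)
    (l : ℕ) (hl : 1 ≤ l) (hl' : l ≤ seg m1 m2 m3 i)
    (hf : Yf m1 m2 m3 d1 q1 u i l ≤ 0) :
    (l = seg m1 m2 m3 i → Yf m1 m2 m3 d2 q2 v i l ≤ 0) ∧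
      (l < seg m1 m2 m3 i → Yf m1 m2 m3 d2 q2 v i l < 0) := by
  obtain ⟨hu, hv, hequ, heqv⟩ := heq
  have hbranch : ∀ w, YPos m1 m2 m3 w → ∀ k, 1 ≤ k → k ≤ seg m1 m2 m3 i → 0 < w i k :=
    fun w hw k hk hkm => hw i k (by omega) hk hkm
  rw [Yf_eq_flux hi hl hl'] at hf ⊢
  exact (hequ.branchEq hi).flux_sign (heqv.branchEq hi) hd1 hq1 hS1 (hbranch u hu)
    (hbranch v hv) hl hl' hf

/-- **Lemma 3.2(ii)**. -/
theorem stmt_2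
    (m1 m2 m3 : ℕ) (d1 q1 d2 q2 r : ℝ)
    (hm1 : 1 ≤ m1) (hm12 : m1 ≤ m2) (hm3 : 2 ≤ m3)
    (hd1 : 0 < d1) (hq1 : 0 < q1) (hr : 0 < r)
    (hS1 : S1mem d1 q1 d2 q2)
    (u v : ℕ → ℕ → ℝ)
    (heq : YPosEquilibrium m1 m2 m3 d1 q1 d2 q2 r u v)
    (i : ℕ) (hi : i = 1 ∨ i = 2)
    (l : ℕ) (hl : 1 ≤ l) (hl' : l ≤ seg m1 m2 m3 i)
    (hf : Yf m1 m2 m3 d1 q1 u i l ≤ 0) :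
    (l = seg m1 m2 m3 i → Yf m1 m2 m3 d2 q2 v i l ≤ 0) ∧
      (l < seg m1 m2 m3 i → Yf m1 m2 m3 d2 q2 v i l < 0) :=
  stmt_2_general m1 m2 m3 d1 q1 d2 q2 r hd1 hq1 hS1 u v heq i hi l hl hl' hf
end
end

section
/- (Lemma 3.3(i)) Assume (d2,q2) ∈ S1 and let (u,v) be a positive equilibrium. Then for each fixed i ∈ {1,2,3} there do not exist integers l_* and l^* with 1 ≤ l_* < l^* ≤ m_i if i ∈ {1,2} (respectively 1 ≤ l_* < l^* ≤ m_i − 1 if i = 3) such that: f^i_k ≥ 0 and g^i_k ≥ 0 for all l_*+1 ≤ k ≤ l^*, and min{f^i_k, g^i_k} ≤ 0 for both k = l_* and k = l^*+1. -/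
open Finset Filter

noncomputable section

private lemma key_contra (a b F G : ℕ → ℝ) (r : ℝ) (la lb : ℕ) (hlab : la < lb)
    (ha : ∀ k, la ≤ k → k ≤ lb → 0 < a k)
    (hb : ∀ k, la ≤ k → k ≤ lb → 0 < b k)
    (hrecF : ∀ k, la ≤ k → k ≤ lb → F (k+1) = F k + a k * (r - a k - b k))
    (hrecG : ∀ k, la ≤ k → k ≤ lb → G (k+1) = G k + b k * (r - a k - b k))
    (hF : ∀ k, la + 1 ≤ k → k ≤ lb → 0 ≤ F k)
    (hG : ∀ k, la + 1 ≤ k → k ≤ lb → 0 ≤ G k)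
    (hdec : ∀ k, la ≤ k → k + 1 ≤ lb → a (k+1) < a k ∧ b (k+1) < b k)
    (hmin1 : F la ≤ 0 ∨ G la ≤ 0)
    (hmin2 : F (lb+1) ≤ 0 ∨ G (lb+1) ≤ 0) : False := by
  have hFla1 : 0 ≤ F (la+1) := hF _ le_rfl hlab
  have hGla1 : 0 ≤ G (la+1) := hG _ le_rfl hlab
  have hrF := hrecF la le_rfl hlab.le
  have hrG := hrecG la le_rfl hlab.le
  have hapos := ha la le_rfl hlab.le
  have hbpos := hb la le_rfl hlab.le
  have hha : 0 ≤ r - a la - b la := by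
    rcases hmin1 with h | h
    · nlinarith
    · nlinarith
  have hFlb : 0 ≤ F lb := hF _ hlab le_rfl
  have hGlb : 0 ≤ G lb := hG _ hlab le_rfl
  have hrF2 := hrecF lb hlab.le le_rfl
  have hrG2 := hrecG lb hlab.le le_rfl
  have hapos2 := ha lb hlab.le le_rfl
  have hbpos2 := hb lb hlab.le le_rfl
  have hhb : r - a lb - b lb ≤ 0 := by
    rcases hmin2 with h | h
    · nlinarith
    · nlinarith
  have hchain : ∀ n, la + 1 ≤ n → n ≤ lb → a n + b n < a la + b la := by
    intro n hn
    induction n, hn using Nat.le_induction with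
    | base =>
      intro h
      obtain ⟨h1, h2⟩ := hdec la le_rfl h
      linarith
    | succ n hn ih =>
      intro h
      obtain ⟨h1, h2⟩ := hdec n (by omega) h
      have := ih (by omega)
      linarith
  have := hchain lb hlab le_rfl
  linarith

private lemma branch_case (mi : ℕ) (d1 q1 d2 q2 r : ℝ)
    (hd1 : 0 < d1) (hq1 : 0 < q1) (hd2 : 0 < d2) (hq2 : 0 < q2)
    (a b F G : ℕ → ℝ)
    (hap : ∀ k, 1 ≤ k → k ≤ mi → 0 < a k)
    (hbp : ∀ k, 1 ≤ k → k ≤ mi → 0 < b k)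
    (hFv : ∀ k, 1 ≤ k → k ≤ mi → F k = d1 * a (k-1) - (d1+q1) * a k)
    (hGv : ∀ k, 1 ≤ k → k ≤ mi → G k = d2 * b (k-1) - (d2+q2) * b k)
    (hF0 : F (mi+1) = 0) (hG0 : G (mi+1) = 0)
    (heqF : ∀ k, 1 ≤ k → k + 1 ≤ mi →
      d1 * a (k-1) - (2*d1+q1) * a k + (d1+q1) * a (k+1) + a k * (r - a k - b k) = 0)
    (heqG : ∀ k, 1 ≤ k → k + 1 ≤ mi →
      d2 * b (k-1) - (2*d2+q2) * b k + (d2+q2) * b (k+1) + b k * (r - b k - a k) = 0)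
    (hbF : -(d1+q1) * a mi + d1 * a (mi-1) + a mi * (r - a mi - b mi) = 0)
    (hbG : -(d2+q2) * b mi + d2 * b (mi-1) + b mi * (r - b mi - a mi) = 0)
    (la lb : ℕ) (hla1 : 1 ≤ la) (hlalb : la < lb) (hlb : lb ≤ mi)
    (hmid : ∀ k, la + 1 ≤ k → k ≤ lb → 0 ≤ F k ∧ 0 ≤ G k)
    (hmin1 : F la ≤ 0 ∨ G la ≤ 0) (hmin2 : F (lb+1) ≤ 0 ∨ G (lb+1) ≤ 0) : False := by
  apply key_contra a b F G r la lb hlalb ?_ ?_ ?_ ?_ ?_ ?_ ?_ hmin1 hmin2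
  · intro k h1 h2; exact hap k (by omega) (by omega)
  · intro k h1 h2; exact hbp k (by omega) (by omega)
  · intro k h1 h2
    have hk1 : 1 ≤ k := by omega
    have hFk := hFv k hk1 (by omega)
    by_cases hc : k + 1 ≤ mi
    · have hFk1 := hFv (k+1) (by omega) hc
      simp only [Nat.add_sub_cancel] at hFk1
      rw [hFk1, hFk]
      linear_combination -(heqF k hk1 hc)
    · have hk : k = mi := by omega
      subst hk
      rw [hF0, hFk]
      linear_combination -hbF
  · intro k h1 h2
    have hk1 : 1 ≤ k := by omega
    have hGk := hGv k hk1 (by omega)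
    by_cases hc : k + 1 ≤ mi
    · have hGk1 := hGv (k+1) (by omega) hc
      simp only [Nat.add_sub_cancel] at hGk1
      rw [hGk1, hGk]
      linear_combination -(heqG k hk1 hc)
    · have hk : k = mi := by omega
      subst hk
      rw [hG0, hGk]
      linear_combination -hbG
  · intro k h1 h2; exact (hmid k h1 h2).1
  · intro k h1 h2; exact (hmid k h1 h2).2
  · intro k h1 h2
    have hmF := (hmid (k+1) (by omega) h2).1
    have hmG := (hmid (k+1) (by omega) h2).2
    have hFv1 := hFv (k+1) (by omega) (by omega)
    have hGv1 := hGv (k+1) (by omega) (by omega)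
    simp only [Nat.add_sub_cancel] at hFv1 hGv1
    have hA := hap (k+1) (by omega) (by omega)
    have hB := hbp (k+1) (by omega) (by omega)
    rw [hFv1] at hmF
    rw [hGv1] at hmG
    constructor
    · nlinarith [mul_pos hq1 hA]
    · nlinarith [mul_pos hq2 hB]

private lemma main_case (m3 : ℕ) (d1 q1 d2 q2 r : ℝ)
    (hd1 : 0 < d1) (hq1 : 0 < q1) (hd2 : 0 < d2) (hq2 : 0 < q2)
    (a b F G : ℕ → ℝ)
    (hap : ∀ k, 1 ≤ k → k ≤ m3 → 0 < a k)
    (hbp : ∀ k, 1 ≤ k → k ≤ m3 → 0 < b k)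
    (hFv : ∀ k, 2 ≤ k → k ≤ m3 → F k = d1 * a (k-1) - (d1+q1) * a k)
    (hGv : ∀ k, 2 ≤ k → k ≤ m3 → G k = d2 * b (k-1) - (d2+q2) * b k)
    (hF1 : F 1 = 0) (hG1 : G 1 = 0)
    (heqF : ∀ k, 2 ≤ k → k + 1 ≤ m3 →
      d1 * a (k-1) - (2*d1+q1) * a k + (d1+q1) * a (k+1) + a k * (r - a k - b k) = 0)
    (heqG : ∀ k, 2 ≤ k → k + 1 ≤ m3 →
      d2 * b (k-1) - (2*d2+q2) * b k + (d2+q2) * b (k+1) + b k * (r - b k - a k) = 0)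
    (hdF : -d1 * a 1 + (d1+q1) * a 2 + a 1 * (r - a 1 - b 1) = 0)
    (hdG : -d2 * b 1 + (d2+q2) * b 2 + b 1 * (r - b 1 - a 1) = 0)
    (la lb : ℕ) (hla1 : 1 ≤ la) (hlalb : la < lb) (hlb : lb ≤ m3 - 1)
    (hmid : ∀ k, la + 1 ≤ k → k ≤ lb → 0 ≤ F k ∧ 0 ≤ G k)
    (hmin1 : F la ≤ 0 ∨ G la ≤ 0) (hmin2 : F (lb+1) ≤ 0 ∨ G (lb+1) ≤ 0) : False := by
  have hm3 : 3 ≤ m3 := by omega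
  apply key_contra a b F G r la lb hlalb ?_ ?_ ?_ ?_ ?_ ?_ ?_ hmin1 hmin2
  · intro k h1 h2; exact hap k (by omega) (by omega)
  · intro k h1 h2; exact hbp k (by omega) (by omega)
  · intro k h1 h2
    have hc : k + 1 ≤ m3 := by omega
    have hFk1 := hFv (k+1) (by omega) hc
    simp only [Nat.add_sub_cancel] at hFk1
    by_cases hk2 : 2 ≤ k
    · have hFk := hFv k hk2 (by omega)
      rw [hFk1, hFk]
      linear_combination -(heqF k hk2 hc)
    · have hk : k = 1 := by omega
      subst hk
      rw [hFk1, hF1]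
      linear_combination -hdF
  · intro k h1 h2
    have hc : k + 1 ≤ m3 := by omega
    have hGk1 := hGv (k+1) (by omega) hc
    simp only [Nat.add_sub_cancel] at hGk1
    by_cases hk2 : 2 ≤ k
    · have hGk := hGv k hk2 (by omega)
      rw [hGk1, hGk]
      linear_combination -(heqG k hk2 hc)
    · have hk : k = 1 := by omega
      subst hk
      rw [hGk1, hG1]
      linear_combination -hdG
  · intro k h1 h2; exact (hmid k h1 h2).1
  · intro k h1 h2; exact (hmid k h1 h2).2
  · intro k h1 h2
    have hmF := (hmid (k+1) (by omega) h2).1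
    have hmG := (hmid (k+1) (by omega) h2).2
    have hFv1 := hFv (k+1) (by omega) (by omega)
    have hGv1 := hGv (k+1) (by omega) (by omega)
    simp only [Nat.add_sub_cancel] at hFv1 hGv1
    have hA := hap (k+1) (by omega) (by omega)
    have hB := hbp (k+1) (by omega) (by omega)
    rw [hFv1] at hmF
    rw [hGv1] at hmG
    constructor
    · nlinarith [mul_pos hq1 hA]
    · nlinarith [mul_pos hq2 hB]

/-- **Lemma 3.3(i)**. -/
theorem stmt_3
    (m1 m2 m3 : ℕ) (d1 q1 d2 q2 r : ℝ)
    (hm1 : 1 ≤ m1) (hm12 : m1 ≤ m2) (hm3 : 2 ≤ m3)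
    (hd1 : 0 < d1) (hq1 : 0 < q1) (hr : 0 < r)
    (hS1 : S1mem d1 q1 d2 q2)
    (u v : ℕ → ℕ → ℝ)
    (heq : YPosEquilibrium m1 m2 m3 d1 q1 d2 q2 r u v)
    (i : ℕ) (hi : i = 1 ∨ i = 2 ∨ i = 3) :
    ¬ ∃ la lb : ℕ, 1 ≤ la ∧ la < lb ∧
      lb ≤ (if i = 3 then m3 - 1 else seg m1 m2 m3 i) ∧
      (∀ k, la + 1 ≤ k → k ≤ lb →
        0 ≤ Yf m1 m2 m3 d1 q1 u i k ∧ 0 ≤ Yf m1 m2 m3 d2 q2 v i k) ∧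
      min (Yf m1 m2 m3 d1 q1 u i la) (Yf m1 m2 m3 d2 q2 v i la) ≤ 0 ∧
      min (Yf m1 m2 m3 d1 q1 u i (lb + 1)) (Yf m1 m2 m3 d2 q2 v i (lb + 1)) ≤ 0 := by
  rintro ⟨la, lb, hla1, hlalb, hlb, hmid, hmn1, hmn2⟩
  obtain ⟨hup, hvp, hequ, heqv⟩ := heq
  obtain ⟨hd2, hd21, hq2, hq2b, hne⟩ := hS1
  rcases hi with hi | hi | hi
  · subst hi
    norm_num [seg] at hlb
    refine branch_case m1 d1 q1 d2 q2 r hd1 hq1 hd2 hq2 (u 1) (v 1)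
      (Yf m1 m2 m3 d1 q1 u 1) (Yf m1 m2 m3 d2 q2 v 1)
      ?_ ?_ ?_ ?_ ?_ ?_ ?_ ?_ ?_ ?_ la lb hla1 hlalb hlb hmid
      (min_le_iff.mp hmn1) (min_le_iff.mp hmn2)
    · intro k h1 h2; exact hup 1 k (Or.inl rfl) h1 (by simpa [seg] using h2)
    · intro k h1 h2; exact hvp 1 k (Or.inl rfl) h1 (by simpa [seg] using h2)
    · intro k h1 h2; simp [Yf, seg, h1, h2]
    · intro k h1 h2; simp [Yf, seg, h1, h2]
    · simp [Yf, seg]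
    · simp [Yf, seg]
    · intro k h1 h2
      exact hequ.2.2.1 1 (Or.inl rfl) k h1 (by simpa [seg] using h2)
    · intro k h1 h2
      exact heqv.2.2.1 1 (Or.inl rfl) k h1 (by simpa [seg] using h2)
    · have := hequ.2.2.2.2.1 1 (Or.inl rfl); simpa [seg] using this
    · have := heqv.2.2.2.2.1 1 (Or.inl rfl); simpa [seg] using this
  · subst hi
    norm_num [seg] at hlb
    refine branch_case m2 d1 q1 d2 q2 r hd1 hq1 hd2 hq2 (u 2) (v 2)
      (Yf m1 m2 m3 d1 q1 u 2) (Yf m1 m2 m3 d2 q2 v 2)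
      ?_ ?_ ?_ ?_ ?_ ?_ ?_ ?_ ?_ ?_ la lb hla1 hlalb hlb hmid
      (min_le_iff.mp hmn1) (min_le_iff.mp hmn2)
    · intro k h1 h2; exact hup 2 k (Or.inr (Or.inl rfl)) h1 (by simpa [seg] using h2)
    · intro k h1 h2; exact hvp 2 k (Or.inr (Or.inl rfl)) h1 (by simpa [seg] using h2)
    · intro k h1 h2; simp [Yf, seg, h1, h2]
    · intro k h1 h2; simp [Yf, seg, h1, h2]
    · simp [Yf, seg]
    · simp [Yf, seg]
    · intro k h1 h2
      exact hequ.2.2.1 2 (Or.inr rfl) k h1 (by simpa [seg] using h2)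
    · intro k h1 h2
      exact heqv.2.2.1 2 (Or.inr rfl) k h1 (by simpa [seg] using h2)
    · have := hequ.2.2.2.2.1 2 (Or.inr rfl); simpa [seg] using this
    · have := heqv.2.2.2.2.1 2 (Or.inr rfl); simpa [seg] using this
  · subst hi
    norm_num at hlb
    refine main_case m3 d1 q1 d2 q2 r hd1 hq1 hd2 hq2 (u 3) (v 3)
      (Yf m1 m2 m3 d1 q1 u 3) (Yf m1 m2 m3 d2 q2 v 3)
      ?_ ?_ ?_ ?_ ?_ ?_ ?_ ?_ ?_ ?_ la lb hla1 hlalb hlb hmid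
      (min_le_iff.mp hmn1) (min_le_iff.mp hmn2)
    · intro k h1 h2; exact hup 3 k (Or.inr (Or.inr rfl)) h1 (by simpa [seg] using h2)
    · intro k h1 h2; exact hvp 3 k (Or.inr (Or.inr rfl)) h1 (by simpa [seg] using h2)
    · intro k h1 h2; simp [Yf, h1, h2]
    · intro k h1 h2; simp [Yf, h1, h2]
    · simp [Yf]
    · simp [Yf]
    · intro k h1 h2; exact hequ.2.2.2.1 k h1 h2
    · intro k h1 h2; exact heqv.2.2.2.1 k h1 h2
    · exact hequ.2.2.2.2.2.1
    · exact heqv.2.2.2.2.2.1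
end
end

section
/- (Lemma 3.3(ii)) Assume (d2,q2) ∈ S1 and let (u,v) be a positive equilibrium. Then there do not exist integers l_1^*, l_2^* with 1 ≤ l_2^* ≤ l_1^* ≤ m1 such that: f^1_k ≥ 0 and g^1_k ≥ 0 for all 1 ≤ k ≤ l_1^*; f^2_k ≤ 0 and g^2_k ≤ 0 for all 1 ≤ k ≤ l_2^*; min{f^1_{l_1^*+1}, g^1_{l_1^*+1}} ≤ 0; and max{f^2_{l_2^*+1}, g^2_{l_2^*+1}} ≥ 0. -/
open Finset Filter

noncomputable section

section Aux

lemma seg_one (m1 m2 m3 : ℕ) : seg m1 m2 m3 1 = m1 := rfl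
lemma seg_two (m1 m2 m3 : ℕ) : seg m1 m2 m3 2 = m2 := rfl
lemma seg_three (m1 m2 m3 : ℕ) : seg m1 m2 m3 3 = m3 := rfl

lemma Yf_branch_eq {m1 m2 m3 : ℕ} {d q : ℝ} {w : ℕ → ℕ → ℝ} {i k : ℕ}
    (hi : i = 1 ∨ i = 2) (hk1 : 1 ≤ k) (hk2 : k ≤ seg m1 m2 m3 i) :
    Yf m1 m2 m3 d q w i k = d * w i (k - 1) - (d + q) * w i k := by
  rcases hi with rfl | rfl <;>
  · simp only [Yf]
    rw [if_neg (by norm_num), if_pos ⟨hk1, hk2⟩]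

lemma Yf_branch_top {m1 m2 m3 : ℕ} {d q : ℝ} {w : ℕ → ℕ → ℝ} {i : ℕ}
    (hi : i = 1 ∨ i = 2) :
    Yf m1 m2 m3 d q w i (seg m1 m2 m3 i + 1) = 0 := by
  rcases hi with rfl | rfl <;>
  · simp only [Yf]
    rw [if_neg (by norm_num), if_neg (by omega)]

lemma Yf_main_eq {m1 m2 m3 : ℕ} {d q : ℝ} {w : ℕ → ℕ → ℝ} {k : ℕ}
    (hk1 : 2 ≤ k) (hk2 : k ≤ m3) :
    Yf m1 m2 m3 d q w 3 k = d * w 3 (k - 1) - (d + q) * w 3 k := by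
  simp only [Yf, if_true]
  rw [if_pos ⟨hk1, hk2⟩]

lemma Yf_main_bot (m1 m2 m3 : ℕ) (d q : ℝ) (w : ℕ → ℕ → ℝ) :
    Yf m1 m2 m3 d q w 3 1 = 0 := by
  simp only [Yf, if_true]
  rw [if_neg (by omega)]

lemma branch_tel {m1 m2 m3 : ℕ} {d q r : ℝ} {w c : ℕ → ℕ → ℝ}
    (h : YEq m1 m2 m3 d q r w c) {i k : ℕ} (hi : i = 1 ∨ i = 2)
    (hk1 : 1 ≤ k) (hk2 : k ≤ seg m1 m2 m3 i) :
    Yf m1 m2 m3 d q w i (k + 1)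
      = Yf m1 m2 m3 d q w i k + w i k * (r - w i k - c i k) := by
  obtain ⟨-, -, hint, -, hup, -, -⟩ := h
  rcases eq_or_lt_of_le hk2 with heq | hlt
  · subst heq
    have hb := hup i hi
    rw [Yf_branch_top hi, Yf_branch_eq hi hk1 le_rfl]
    linear_combination -hb
  · have hk2' : k + 1 ≤ seg m1 m2 m3 i := hlt
    have he := hint i hi k hk1 hk2'
    rw [Yf_branch_eq hi (by omega) hk2', Yf_branch_eq hi hk1 hk2,
        Nat.add_sub_cancel]
    linear_combination -he

lemma main_tel {m1 m2 m3 : ℕ} {d q r : ℝ} {w c : ℕ → ℕ → ℝ}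
    (h : YEq m1 m2 m3 d q r w c) {k : ℕ} (hk1 : 1 ≤ k) (hk2 : k + 1 ≤ m3) :
    Yf m1 m2 m3 d q w 3 (k + 1)
      = Yf m1 m2 m3 d q w 3 k + w 3 k * (r - w 3 k - c 3 k) := by
  obtain ⟨-, -, -, hint, -, hdn, -⟩ := h
  rcases eq_or_lt_of_le hk1 with heq | hlt
  · subst heq
    rw [Yf_main_eq (by norm_num) hk2, Yf_main_bot]
    show d * w 3 1 - (d + q) * w 3 2 = 0 + w 3 1 * (r - w 3 1 - c 3 1)
    linear_combination -hdn
  · have hk1' : 2 ≤ k := hlt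
    have he := hint k hk1' hk2
    rw [Yf_main_eq (by omega) (by omega), Yf_main_eq hk1' (by omega),
        Nat.add_sub_cancel]
    linear_combination -he

lemma junc_rel {m1 m2 m3 : ℕ} {d q r : ℝ} {w c : ℕ → ℕ → ℝ}
    (h : YEq m1 m2 m3 d q r w c) (hm1 : 1 ≤ m1) (hm2 : 1 ≤ m2) (hm3 : 2 ≤ m3) :
    Yf m1 m2 m3 d q w 3 m3 + w 3 m3 * (r - w 3 m3 - c 3 m3)
      = Yf m1 m2 m3 d q w 1 1 + Yf m1 m2 m3 d q w 2 1 := by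
  obtain ⟨h10, h20, -, -, -, -, hj⟩ := h
  rw [Yf_main_eq hm3 le_rfl,
      Yf_branch_eq (Or.inl rfl) le_rfl (by rw [seg_one]; exact hm1),
      Yf_branch_eq (Or.inr rfl) le_rfl (by rw [seg_two]; exact hm2),
      show (1:ℕ) - 1 = 0 from rfl, h10, h20]
  linear_combination hj

end Aux

set_option maxHeartbeats 1600000 in
/-- **Lemma 3.3(ii)**. -/
theorem stmt_4
    (m1 m2 m3 : ℕ) (d1 q1 d2 q2 r : ℝ)
    (hm1 : 1 ≤ m1) (hm12 : m1 ≤ m2) (hm3 : 2 ≤ m3)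
    (hd1 : 0 < d1) (hq1 : 0 < q1) (hr : 0 < r)
    (hS1 : S1mem d1 q1 d2 q2)
    (u v : ℕ → ℕ → ℝ)
    (heq : YPosEquilibrium m1 m2 m3 d1 q1 d2 q2 r u v) :
    ¬ ∃ l1 l2 : ℕ, 1 ≤ l2 ∧ l2 ≤ l1 ∧ l1 ≤ m1 ∧
      (∀ k, 1 ≤ k → k ≤ l1 →
        0 ≤ Yf m1 m2 m3 d1 q1 u 1 k ∧ 0 ≤ Yf m1 m2 m3 d2 q2 v 1 k) ∧
      (∀ k, 1 ≤ k → k ≤ l2 →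
        Yf m1 m2 m3 d1 q1 u 2 k ≤ 0 ∧ Yf m1 m2 m3 d2 q2 v 2 k ≤ 0) ∧
      min (Yf m1 m2 m3 d1 q1 u 1 (l1 + 1)) (Yf m1 m2 m3 d2 q2 v 1 (l1 + 1)) ≤ 0 ∧
      0 ≤ max (Yf m1 m2 m3 d1 q1 u 2 (l2 + 1)) (Yf m1 m2 m3 d2 q2 v 2 (l2 + 1)) := by
  obtain ⟨hd2, hd21, hq2, hq21, hne⟩ := hS1
  obtain ⟨hupos, hvpos, hueq, hveq⟩ := heq
  rintro ⟨l1, l2, hl2, hl21, hl1m, hA, hB, hC, hD⟩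
  have hl1 : 1 ≤ l1 := le_trans hl2 hl21
  have hl2m2 : l2 ≤ m2 := le_trans (le_trans hl21 hl1m) hm12
  have hm2 : 1 ≤ m2 := le_trans hm1 hm12
  -- positivity facts
  have pu3 : ∀ k, 1 ≤ k → k ≤ m3 → 0 < u 3 k := fun k h1 h2 =>
    hupos 3 k (by tauto) h1 (by rw [seg_three]; exact h2)
  have pv3 : ∀ k, 1 ≤ k → k ≤ m3 → 0 < v 3 k := fun k h1 h2 =>
    hvpos 3 k (by tauto) h1 (by rw [seg_three]; exact h2)
  have hU : 0 < u 3 m3 := pu3 m3 (by omega) le_rfl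
  have hV : 0 < v 3 m3 := pv3 m3 (by omega) le_rfl
  have pu1 : ∀ k, k ≤ m1 → 0 < u 1 k := by
    intro k hk
    match k with
    | 0 => rw [hueq.1]; exact hU
    | (k+1) => exact hupos 1 (k+1) (by tauto) (by omega) (by rw [seg_one]; exact hk)
  have pv1 : ∀ k, k ≤ m1 → 0 < v 1 k := by
    intro k hk
    match k with
    | 0 => rw [hveq.1]; exact hV
    | (k+1) => exact hvpos 1 (k+1) (by tauto) (by omega) (by rw [seg_one]; exact hk)
  have pu2 : ∀ k, k ≤ m2 → 0 < u 2 k := by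
    intro k hk
    match k with
    | 0 => rw [hueq.2.1]; exact hU
    | (k+1) => exact hupos 2 (k+1) (by tauto) (by omega) (by rw [seg_two]; exact hk)
  have pv2 : ∀ k, k ≤ m2 → 0 < v 2 k := by
    intro k hk
    match k with
    | 0 => rw [hveq.2.1]; exact hV
    | (k+1) => exact hvpos 2 (k+1) (by tauto) (by omega) (by rw [seg_two]; exact hk)
  -- unfolded sign hypotheses
  have hA' : ∀ k, 1 ≤ k → k ≤ l1 →
      (d1 + q1) * u 1 k ≤ d1 * u 1 (k-1) ∧ (d2 + q2) * v 1 k ≤ d2 * v 1 (k-1) := by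
    intro k h1 h2
    obtain ⟨ha, hb⟩ := hA k h1 h2
    rw [Yf_branch_eq (Or.inl rfl) h1 (by rw [seg_one]; omega)] at ha
    rw [Yf_branch_eq (Or.inl rfl) h1 (by rw [seg_one]; omega)] at hb
    exact ⟨by linarith, by linarith⟩
  have hB' : ∀ k, 1 ≤ k → k ≤ l2 →
      d1 * u 2 (k-1) ≤ (d1 + q1) * u 2 k ∧ d2 * v 2 (k-1) ≤ (d2 + q2) * v 2 k := by
    intro k h1 h2
    obtain ⟨ha, hb⟩ := hB k h1 h2
    rw [Yf_branch_eq (Or.inr rfl) h1 (by rw [seg_two]; omega)] at ha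
    rw [Yf_branch_eq (Or.inr rfl) h1 (by rw [seg_two]; omega)] at hb
    exact ⟨by linarith, by linarith⟩
  -- Step 1 : the logistic term at (2, l2) is nonnegative
  have hs2 : 0 ≤ r - u 2 l2 - v 2 l2 := by
    have hu2pos := pu2 l2 hl2m2
    have hv2pos := pv2 l2 hl2m2
    rcases le_max_iff.mp hD with h | h
    · have ht := branch_tel hueq (Or.inr rfl) hl2 (by rw [seg_two]; exact hl2m2)
      have hf := (hB l2 hl2 le_rfl).1
      have hprod : 0 ≤ u 2 l2 * (r - u 2 l2 - v 2 l2) := by rw [ht] at h; linarith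
      nlinarith [hprod, hu2pos]
    · have ht := branch_tel hveq (Or.inr rfl) hl2 (by rw [seg_two]; exact hl2m2)
      have hf := (hB l2 hl2 le_rfl).2
      have hprod : 0 ≤ v 2 l2 * (r - v 2 l2 - u 2 l2) := by rw [ht] at h; linarith
      nlinarith [hprod, hv2pos]
  -- Step 2 : comparison between branch 1 and branch 2
  have hcomp : ∀ k, k ≤ l2 → u 1 k ≤ u 2 k ∧ v 1 k ≤ v 2 k := by
    intro k
    induction k with
    | zero =>
      intro _
      rw [hueq.1, hueq.2.1, hveq.1, hveq.2.1]
      exact ⟨le_rfl, le_rfl⟩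
    | succ k ih =>
      intro hk
      obtain ⟨ihu, ihv⟩ := ih (by omega)
      have h1 := (hA' (k+1) (by omega) (by omega)).1
      have h2 := (hB' (k+1) (by omega) hk).1
      have h3 := (hA' (k+1) (by omega) (by omega)).2
      have h4 := (hB' (k+1) (by omega) hk).2
      simp only [Nat.add_sub_cancel] at h1 h2 h3 h4
      constructor
      · have hmul : d1 * u 1 k ≤ d1 * u 2 k := mul_le_mul_of_nonneg_left ihu hd1.le
        have hc : (d1+q1) * u 1 (k+1) ≤ (d1+q1) * u 2 (k+1) := by linarith
        exact le_of_mul_le_mul_left hc (by linarith)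
      · have hmul : d2 * v 1 k ≤ d2 * v 2 k := mul_le_mul_of_nonneg_left ihv hd2.le
        have hc : (d2+q2) * v 1 (k+1) ≤ (d2+q2) * v 2 (k+1) := by linarith
        exact le_of_mul_le_mul_left hc (by linarith)
  -- Step 3 : strict decrease along branch 1
  have hdec : ∀ k, 1 ≤ k → k ≤ l1 → u 1 k + v 1 k < u 1 (k-1) + v 1 (k-1) := by
    intro k h1 h2
    obtain ⟨ha, hb⟩ := hA' k h1 h2
    have hu0 : 0 < u 1 (k-1) := pu1 (k-1) (by omega)
    have hv0 : 0 < v 1 (k-1) := pv1 (k-1) (by omega)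
    have h5 : u 1 k < u 1 (k-1) := by
      have hc : (d1+q1) * u 1 k < (d1+q1) * u 1 (k-1) := by nlinarith [mul_pos hq1 hu0]
      exact lt_of_mul_lt_mul_left hc (by linarith)
    have h6 : v 1 k < v 1 (k-1) := by
      have hc : (d2+q2) * v 1 k < (d2+q2) * v 1 (k-1) := by nlinarith [mul_pos hq2 hv0]
      exact lt_of_mul_lt_mul_left hc (by linarith)
    linarith
  have hmono : ∀ k, k ≤ l1 → ∀ j, j ≤ k →
      (u 1 k + v 1 k ≤ u 1 j + v 1 j) ∧ (j < k → u 1 k + v 1 k < u 1 j + v 1 j) := by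
    intro k
    induction k with
    | zero =>
      intro _ j hj
      have hj0 : j = 0 := by omega
      subst hj0
      exact ⟨le_rfl, fun h => absurd h (by omega)⟩
    | succ k ih =>
      intro hk j hj
      have hd := hdec (k+1) (by omega) hk
      simp only [Nat.add_sub_cancel] at hd
      rcases Nat.lt_or_ge j (k+1) with hlt | hge
      · have hj' : j ≤ k := by omega
        obtain ⟨ih1, -⟩ := ih (by omega) j hj'
        exact ⟨by linarith, fun _ => by linarith⟩
      · have hj1 : j = k+1 := by omega
        subst hj1
        exact ⟨le_rfl, fun h => absurd h (by omega)⟩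
  -- Step 4 : the logistic term at (1, l1) is nonpositive; conclude l1 = l2
  have hs1l1 : r - u 1 l1 - v 1 l1 ≤ 0 := by
    have hu1pos := pu1 l1 hl1m
    have hv1pos := pv1 l1 hl1m
    rcases min_le_iff.mp hC with h | h
    · have ht := branch_tel hueq (Or.inl rfl) hl1 (by rw [seg_one]; exact hl1m)
      have hf := (hA l1 hl1 le_rfl).1
      have hprod : u 1 l1 * (r - u 1 l1 - v 1 l1) ≤ 0 := by rw [ht] at h; linarith
      nlinarith [hprod, hu1pos]
    · have ht := branch_tel hveq (Or.inl rfl) hl1 (by rw [seg_one]; exact hl1m)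
      have hf := (hA l1 hl1 le_rfl).2
      have hprod : v 1 l1 * (r - v 1 l1 - u 1 l1) ≤ 0 := by rw [ht] at h; linarith
      nlinarith [hprod, hv1pos]
  have hcl2 := hcomp l2 le_rfl
  have hs1l2 : 0 ≤ r - u 1 l2 - v 1 l2 := by linarith [hcl2.1, hcl2.2]
  have hm0 := hmono l1 le_rfl l2 hl21
  have hll : l2 = l1 := by
    by_contra hne'
    have hlt : l2 < l1 := lt_of_le_of_ne hl21 hne'
    have := hm0.2 hlt
    linarith
  subst hll
  have hpsi1 : u 1 l2 + v 1 l2 = r := by linarith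
  have hpsi2 : u 2 l2 + v 2 l2 = r := by linarith [hcl2.1, hcl2.2]
  have hueql : u 1 l2 = u 2 l2 := by linarith [hcl2.1, hcl2.2]
  have hveql : v 1 l2 = v 2 l2 := by linarith [hcl2.1, hcl2.2]
  -- Step 6 : equality propagates down to the junction
  have hdown : ∀ j, j ≤ l2 → u 1 (l2 - j) = u 2 (l2 - j) ∧ v 1 (l2 - j) = v 2 (l2 - j) := by
    intro j
    induction j with
    | zero =>
      intro _
      simpa using ⟨hueql, hveql⟩
    | succ j ih =>
      intro hj
      obtain ⟨ihu, ihv⟩ := ih (by omega)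
      set k := l2 - j with hkdef
      have hk1 : 1 ≤ k := by omega
      have hkl : k ≤ l2 := by omega
      have h1 := (hA' k hk1 (by omega)).1
      have h2 := (hB' k hk1 hkl).1
      have h3 := (hA' k hk1 (by omega)).2
      have h4 := (hB' k hk1 hkl).2
      have hcc := hcomp (k-1) (by omega)
      have e1 : u 1 (k-1) = u 2 (k-1) := by
        have hmul : d1 * u 1 (k-1) ≤ d1 * u 2 (k-1) := mul_le_mul_of_nonneg_left hcc.1 hd1.le
        have h2' : d1 * u 2 (k-1) ≤ (d1+q1) * u 1 k := by rw [ihu]; exact h2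
        have heq2 : d1 * u 1 (k-1) = d1 * u 2 (k-1) := le_antisymm hmul (by linarith)
        exact mul_left_cancel₀ (ne_of_gt hd1) heq2
      have e2 : v 1 (k-1) = v 2 (k-1) := by
        have hmul : d2 * v 1 (k-1) ≤ d2 * v 2 (k-1) := mul_le_mul_of_nonneg_left hcc.2 hd2.le
        have h4' : d2 * v 2 (k-1) ≤ (d2+q2) * v 1 k := by rw [ihv]; exact h4
        have heq2 : d2 * v 1 (k-1) = d2 * v 2 (k-1) := le_antisymm hmul (by linarith)
        exact mul_left_cancel₀ (ne_of_gt hd2) heq2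
      refine ⟨?_, ?_⟩ <;> rw [show l2 - (j+1) = k - 1 from by omega]
      exacts [e1, e2]
  have heqk : ∀ k, k ≤ l2 → u 1 k = u 2 k ∧ v 1 k = v 2 k := by
    intro k hk
    have := hdown (l2 - k) (by omega)
    rwa [show l2 - (l2 - k) = k from by omega] at this
  have hf0 : ∀ k, 1 ≤ k → k ≤ l2 →
      d1 * u 1 (k-1) = (d1+q1) * u 1 k ∧ d2 * v 1 (k-1) = (d2+q2) * v 1 k := by
    intro k h1 h2
    obtain ⟨ha, hav⟩ := hA' k h1 (by omega)
    obtain ⟨hb, hbv⟩ := hB' k h1 h2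
    obtain ⟨eu, ev⟩ := heqk k h2
    obtain ⟨eu', ev'⟩ := heqk (k-1) (by omega)
    constructor
    · rw [← eu', ← eu] at hb
      linarith
    · rw [← ev', ← ev] at hbv
      linarith
  -- Step 7 : l2 = 1
  have hl2eq1 : l2 = 1 := by
    by_contra hne'
    have h2l : 2 ≤ l2 := by omega
    have ht := branch_tel hueq (Or.inl rfl) (show 1 ≤ l2 - 1 by omega)
        (by rw [seg_one]; omega)
    rw [show l2 - 1 + 1 = l2 from by omega] at ht
    have hz1 : Yf m1 m2 m3 d1 q1 u 1 l2 = 0 := by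
      rw [Yf_branch_eq (Or.inl rfl) (by omega) (by rw [seg_one]; omega)]
      have := (hf0 l2 (by omega) le_rfl).1
      linarith
    have hz2 : Yf m1 m2 m3 d1 q1 u 1 (l2-1) = 0 := by
      rw [Yf_branch_eq (Or.inl rfl) (by omega) (by rw [seg_one]; omega)]
      have := (hf0 (l2-1) (by omega) (by omega)).1
      linarith
    rw [hz1, hz2] at ht
    have hpos := pu1 (l2-1) (by omega)
    have hprod0 : u 1 (l2-1) * (r - u 1 (l2-1) - v 1 (l2-1)) = 0 := by linarith
    have hs0 : r - u 1 (l2-1) - v 1 (l2-1) = 0 := by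
      rcases mul_eq_zero.mp hprod0 with h | h
      · exact absurd h (ne_of_gt hpos)
      · exact h
    have hdl := hdec l2 (by omega) le_rfl
    linarith
  subst hl2eq1
  -- Step 8 : junction fluxes
  have e1 := (hf0 1 le_rfl le_rfl).1
  have e2 := (hf0 1 le_rfl le_rfl).2
  simp only [Nat.sub_self] at e1 e2
  have e1' : d1 * u 2 0 = (d1+q1) * u 2 1 := by
    have h0 := (heqk 0 (by omega)).1
    have h1' := (heqk 1 le_rfl).1
    rw [← h0, ← h1']; exact e1
  have e2' : d2 * v 2 0 = (d2+q2) * v 2 1 := by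
    have h0 := (heqk 0 (by omega)).2
    have h1' := (heqk 1 le_rfl).2
    rw [← h0, ← h1']; exact e2
  have hjr := junc_rel hueq hm1 hm2 hm3
  have hjrv := junc_rel hveq hm1 hm2 hm3
  have hz11 : Yf m1 m2 m3 d1 q1 u 1 1 = 0 := by
    rw [Yf_branch_eq (Or.inl rfl) le_rfl (by rw [seg_one]; omega)]
    simp only [Nat.sub_self]
    linarith
  have hz21 : Yf m1 m2 m3 d1 q1 u 2 1 = 0 := by
    rw [Yf_branch_eq (Or.inr rfl) le_rfl (by rw [seg_two]; omega)]
    simp only [Nat.sub_self]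
    linarith [e1']
  have hz11v : Yf m1 m2 m3 d2 q2 v 1 1 = 0 := by
    rw [Yf_branch_eq (Or.inl rfl) le_rfl (by rw [seg_one]; omega)]
    simp only [Nat.sub_self]
    linarith
  have hz21v : Yf m1 m2 m3 d2 q2 v 2 1 = 0 := by
    rw [Yf_branch_eq (Or.inr rfl) le_rfl (by rw [seg_two]; omega)]
    simp only [Nat.sub_self]
    linarith [e2']
  rw [hz11, hz21] at hjr
  rw [hz11v, hz21v] at hjrv
  have hu11 : u 1 1 < u 3 m3 := by
    have h0 : u 1 0 = u 3 m3 := hueq.1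
    rw [h0] at e1
    have hc : (d1+q1) * u 1 1 < (d1+q1) * u 3 m3 := by nlinarith [mul_pos hq1 hU]
    exact lt_of_mul_lt_mul_left hc (by linarith)
  have hv11 : v 1 1 < v 3 m3 := by
    have h0 : v 1 0 = v 3 m3 := hveq.1
    rw [h0] at e2
    have hc : (d2+q2) * v 1 1 < (d2+q2) * v 3 m3 := by nlinarith [mul_pos hq2 hV]
    exact lt_of_mul_lt_mul_left hc (by linarith)
  have htau : 0 < u 3 m3 + v 3 m3 - r := by linarith
  have hFeq : Yf m1 m2 m3 d1 q1 u 3 m3 = u 3 m3 * (u 3 m3 + v 3 m3 - r) := by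
    linear_combination hjr
  have hGeq : Yf m1 m2 m3 d2 q2 v 3 m3 = v 3 m3 * (u 3 m3 + v 3 m3 - r) := by
    linear_combination hjrv
  have hFpos : 0 < Yf m1 m2 m3 d1 q1 u 3 m3 := hFeq ▸ mul_pos hU htau
  have hGpos : 0 < Yf m1 m2 m3 d2 q2 v 3 m3 := hGeq ▸ mul_pos hV htau
  -- Step 9 : main-river contradiction
  have hdec3 : ∀ k, 2 ≤ k → k ≤ m3 →
      0 < Yf m1 m2 m3 d1 q1 u 3 k → 0 < Yf m1 m2 m3 d2 q2 v 3 k →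
      u 3 k + v 3 k < u 3 (k-1) + v 3 (k-1) := by
    intro k h2 hk hFu hFv
    rw [Yf_main_eq h2 hk] at hFu
    rw [Yf_main_eq h2 hk] at hFv
    have hu0 : 0 < u 3 (k-1) := pu3 (k-1) (by omega) (by omega)
    have hv0 : 0 < v 3 (k-1) := pv3 (k-1) (by omega) (by omega)
    have h5 : u 3 k < u 3 (k-1) := by
      have hc : (d1+q1) * u 3 k < (d1+q1) * u 3 (k-1) := by nlinarith [mul_pos hq1 hu0]
      exact lt_of_mul_lt_mul_left hc (by linarith)
    have h6 : v 3 k < v 3 (k-1) := by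
      have hc : (d2+q2) * v 3 k < (d2+q2) * v 3 (k-1) := by nlinarith [mul_pos hq2 hv0]
      exact lt_of_mul_lt_mul_left hc (by linarith)
    linarith
  classical
  have hex : ∃ k, ∀ j, k ≤ j → j ≤ m3 →
      0 < Yf m1 m2 m3 d1 q1 u 3 j ∧ 0 < Yf m1 m2 m3 d2 q2 v 3 j := by
    refine ⟨m3, fun j hj hj' => ?_⟩
    have hjm : j = m3 := le_antisymm hj' hj
    subst hjm
    exact ⟨hFpos, hGpos⟩
  set k0 := Nat.find hex with hk0def
  have hQK := Nat.find_spec hex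
  have hk0m3 : k0 ≤ m3 := Nat.find_min' hex (fun j hj hj' => by
      have hjm : j = m3 := le_antisymm hj' hj
      subst hjm
      exact ⟨hFpos, hGpos⟩)
  have hk02 : 2 ≤ k0 := by
    by_contra hcon
    have hx := (hQK 1 (by omega) (by omega)).1
    rw [Yf_main_bot] at hx
    exact lt_irrefl 0 hx
  have hnQ : ¬ (∀ j, k0 - 1 ≤ j → j ≤ m3 →
      0 < Yf m1 m2 m3 d1 q1 u 3 j ∧ 0 < Yf m1 m2 m3 d2 q2 v 3 j) :=
    Nat.find_min hex (by omega)
  have hbad : Yf m1 m2 m3 d1 q1 u 3 (k0-1) ≤ 0 ∨ Yf m1 m2 m3 d2 q2 v 3 (k0-1) ≤ 0 := by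
    by_contra hcon
    push_neg at hcon
    obtain ⟨hc1, hc2⟩ := hcon
    apply hnQ
    intro j hj hjm
    rcases Nat.lt_or_ge j k0 with h | h
    · have hjm' : j = k0 - 1 := by omega
      subst hjm'
      exact ⟨hc1, hc2⟩
    · exact hQK j h hjm
  have hk01 : 1 ≤ k0 - 1 := by omega
  have hsp : 0 < r - u 3 (k0-1) - v 3 (k0-1) := by
    have hFk0 := hQK k0 le_rfl hk0m3
    rcases hbad with h | h
    · have ht := main_tel hueq hk01 (show (k0-1) + 1 ≤ m3 from by omega)
      rw [show k0 - 1 + 1 = k0 from by omega] at ht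
      have hu0 : 0 < u 3 (k0-1) := pu3 _ (by omega) (by omega)
      nlinarith [hFk0.1, ht, h, hu0]
    · have ht := main_tel hveq hk01 (show (k0-1) + 1 ≤ m3 from by omega)
      rw [show k0 - 1 + 1 = k0 from by omega] at ht
      have hv0 : 0 < v 3 (k0-1) := pv3 _ (by omega) (by omega)
      nlinarith [hFk0.2, ht, h, hv0]
  have hchain : ∀ j, k0 ≤ j → j ≤ m3 → u 3 j + v 3 j < u 3 (k0-1) + v 3 (k0-1) := by
    intro j hj
    induction j, hj using Nat.le_induction with
    | base =>
      intro hm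
      have h := hQK k0 le_rfl hm
      exact hdec3 k0 hk02 hm h.1 h.2
    | succ j hj ih =>
      intro hm
      have h := hQK (j+1) (by omega) hm
      have hd := hdec3 (j+1) (by omega) hm h.1 h.2
      simp only [Nat.add_sub_cancel] at hd
      have hih := ih (by omega)
      linarith
  have hfin := hchain m3 hk0m3 le_rfl
  linarith
end
end
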